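/- arXiv:2308.15184 — 6 statements merged into one kernel-verified Lean document; each statement's English description precedes it below -/
import Mathlib

section
/- For every LTLf formula φ over a finite set P of atomic propositions, the language L(φ) of nonempty finite traces over the alphabet Set P that satisfy φ is regular: there exists a DFA over the alphabet Set P with a finite state type that accepts exactly the nonempty finite traces π with π ⊨ φ. -/
/-- Syntax of LTLf formulas over atomic propositions `P`:
`φ ::= p | ¬φ | φ ∧ φ | ◯φ | φ U φ`. -/
inductive LTLf (P : Type) : Type where
  | atom : P → LTLf P
  | not  : LTLf P → LTLf P
  | and  : LTLf P → LTLf P → LTLf P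
  | next : LTLf P → LTLf P
  | untl : LTLf P → LTLf P → LTLf P

/-- `LTLf.SatAt π φ i` : the finite trace `π` satisfies `φ` at position `i`. -/
def LTLf.SatAt {P : Type} (π : List (Set P)) : LTLf P → ℕ → Prop
  | .atom p, i => p ∈ π.getD i ∅
  | .not φ, i => ¬ LTLf.SatAt π φ i
  | .and φ ψ, i => LTLf.SatAt π φ i ∧ LTLf.SatAt π ψ i
  | .next φ, i => i + 1 < π.length ∧ LTLf.SatAt π φ (i + 1)
  | .untl φ ψ, i =>
      ∃ j, i ≤ j ∧ j < π.length ∧ LTLf.SatAt π ψ j ∧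
        ∀ k, i ≤ k → k < j → LTLf.SatAt π φ k

/-- `π ⊨ φ` : the finite trace `π` satisfies `φ` (at position `0`). -/
def LTLf.Sat {P : Type} (π : List (Set P)) (φ : LTLf P) : Prop :=
  LTLf.SatAt π φ 0

/-!
Read a trace from its end. The truth values at position `0` of all subformulas of `φ` on `a :: σ`
are determined by the letter `a`, by whether `σ` is empty, and by the same truth values on `σ`,
through the expansion laws `◯ψ ≡ (σ ≠ []) ∧ ψ(σ)` and `ψ U χ ≡ χ ∨ (ψ ∧ ◯(ψ U χ))`. Since `φ` has
finitely many subformulas, this is a finite automaton for the reversed language, and regular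
languages are closed under reversal.
-/

namespace LTLf

variable {P : Type}

def subformulas : LTLf P → List (LTLf P)
  | atom p => [atom p]
  | not ψ => not ψ :: ψ.subformulas
  | and ψ χ => and ψ χ :: (ψ.subformulas ++ χ.subformulas)
  | next ψ => next ψ :: ψ.subformulas
  | untl ψ χ => untl ψ χ :: (ψ.subformulas ++ χ.subformulas)

theorem mem_subformulas_self (φ : LTLf P) : φ ∈ φ.subformulas := by
  cases φ <;> simp [subformulas]

theorem subformulas_subset_of_mem {φ ψ : LTLf P} (h : ψ ∈ φ.subformulas) :
    ψ.subformulas ⊆ φ.subformulas := by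
  induction φ with
  | atom p =>
    simp only [subformulas, List.mem_singleton] at h
    subst h; exact List.Subset.refl _
  | not φ ih | next φ ih =>
    rcases List.mem_cons.mp h with rfl | h
    · exact List.Subset.refl _
    · exact List.Subset.trans (ih h) (List.subset_cons_self _ _)
  | and φ₁ φ₂ ih₁ ih₂ | untl φ₁ φ₂ ih₁ ih₂ =>
    rcases List.mem_cons.mp h with rfl | h
    · exact List.Subset.refl _
    refine List.Subset.trans ?_ (List.subset_cons_self _ _)
    rcases List.mem_append.mp h with h | h
    · exact List.Subset.trans (ih₁ h) (List.subset_append_left _ _)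
    · exact List.Subset.trans (ih₂ h) (List.subset_append_right _ _)

/-- `SatCons a ne v ψ` is the truth of `ψ` at the head of `a :: σ`, where `ne` says `σ ≠ []` and
`v` gives the truth of formulas at the head of `σ`. -/
def SatCons (a : Set P) (ne : Prop) (v : LTLf P → Prop) : LTLf P → Prop
  | atom p => p ∈ a
  | not ψ => ¬ SatCons a ne v ψ
  | and ψ χ => SatCons a ne v ψ ∧ SatCons a ne v χ
  | next ψ => ne ∧ v ψ
  | untl ψ χ => SatCons a ne v χ ∨ (SatCons a ne v ψ ∧ v (untl ψ χ))

theorem satCons_congr {a : Set P} {ne : Prop} {v w : LTLf P → Prop} {ψ : LTLf P}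
    (h : ∀ χ ∈ ψ.subformulas, v χ ↔ w χ) : SatCons a ne v ψ ↔ SatCons a ne w ψ := by
  induction ψ with
  | atom p => rfl
  | not ψ ih =>
    exact not_congr (ih fun χ hχ => h χ (List.mem_cons_of_mem _ hχ))
  | and ψ χ ih₁ ih₂ =>
    exact and_congr (ih₁ fun θ hθ => h θ (by simp [subformulas, hθ]))
      (ih₂ fun θ hθ => h θ (by simp [subformulas, hθ]))
  | next ψ _ =>
    exact and_congr Iff.rfl (h ψ (List.mem_cons_of_mem _ (mem_subformulas_self ψ)))
  | untl ψ χ ih₁ ih₂ =>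
    exact or_congr (ih₂ fun θ hθ => h θ (by simp [subformulas, hθ]))
      (and_congr (ih₁ fun θ hθ => h θ (by simp [subformulas, hθ]))
        (h _ (mem_subformulas_self _)))

theorem satAt_cons_succ (a : Set P) (σ : List (Set P)) (ψ : LTLf P) (i : ℕ) :
    SatAt (a :: σ) ψ (i + 1) ↔ SatAt σ ψ i := by
  induction ψ generalizing i with
  | atom p => simp [SatAt]
  | not ψ ih => simp [SatAt, ih]
  | and ψ χ ih₁ ih₂ => simp [SatAt, ih₁, ih₂]
  | next ψ ih => simp [SatAt, ih]
  | untl ψ χ ih₁ ih₂ =>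
    constructor
    · rintro ⟨j, hij, hj, hχ, hψ⟩
      obtain ⟨j, rfl⟩ : ∃ j', j = j' + 1 := ⟨j - 1, by omega⟩
      refine ⟨j, by omega, by simpa using hj, (ih₂ j).mp hχ, fun k hik hkj => ?_⟩
      exact (ih₁ k).mp (hψ (k + 1) (by omega) (by omega))
    · rintro ⟨j, hij, hj, hχ, hψ⟩
      refine ⟨j + 1, by omega, by simpa using hj, (ih₂ j).mpr hχ, fun k hik hkj => ?_⟩
      obtain ⟨k, rfl⟩ : ∃ k', k = k' + 1 := ⟨k - 1, by omega⟩
      exact (ih₁ k).mpr (hψ k (by omega) (by omega))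

theorem satAt_cons_zero (a : Set P) (σ : List (Set P)) (ψ : LTLf P) :
    SatAt (a :: σ) ψ 0 ↔ SatCons a (σ ≠ []) (fun χ => SatAt σ χ 0) ψ := by
  induction ψ with
  | atom p => simp [SatAt, SatCons]
  | not ψ ih => simp [SatAt, SatCons, ih]
  | and ψ χ ih₁ ih₂ => simp [SatAt, SatCons, ih₁, ih₂]
  | next ψ _ =>
    simp [SatAt, SatCons, satAt_cons_succ, List.length_pos_iff]
  | untl ψ χ ih₁ ih₂ =>
    simp only [SatCons, ← ih₁, ← ih₂]
    constructor
    · rintro ⟨_ | j, -, hj, hχ, hψ⟩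
      · exact Or.inl hχ
      refine Or.inr ⟨hψ 0 le_rfl (by omega), j, Nat.zero_le j, by simpa using hj,
        (satAt_cons_succ a σ χ j).mp hχ, fun k _ hkj => ?_⟩
      exact (satAt_cons_succ a σ ψ k).mp (hψ (k + 1) (by omega) (by omega))
    · rintro (hχ | ⟨hψ₀, j, -, hj, hχ, hψ⟩)
      · exact ⟨0, le_rfl, by simp, hχ, fun k _ hk => absurd hk (Nat.not_lt_zero k)⟩
      refine ⟨j + 1, by omega, by simpa using hj, (satAt_cons_succ a σ χ j).mpr hχ, ?_⟩
      rintro (_ | k) - hkj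
      · exact hψ₀
      · exact (satAt_cons_succ a σ ψ k).mpr (hψ k (by omega) (by omega))

def language (φ : LTLf P) : Language (Set P) :=
  {π | π ≠ [] ∧ Sat π φ}

/-- Whether a trace is nonempty, and which subformulas of `φ` hold at its position `0`. -/
abbrev Profile (φ : LTLf P) : Type :=
  Prop × ({ψ // ψ ∈ φ.subformulas} → Prop)

def profile (φ : LTLf P) (σ : List (Set P)) : Profile φ :=
  (σ ≠ [], fun ψ => SatAt σ ψ.1 0)

def reverseDFA (φ : LTLf P) : DFA (Set P) (Profile φ) where
  step pr a := (True, fun ψ => SatCons a pr.1 (fun χ => ∃ h : χ ∈ φ.subformulas, pr.2 ⟨χ, h⟩) ψ.1)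
  start := profile φ []
  accept := {pr | pr.1 ∧ pr.2 ⟨φ, mem_subformulas_self φ⟩}

theorem reverseDFA_step_profile (φ : LTLf P) (σ : List (Set P)) (a : Set P) :
    (reverseDFA φ).step (profile φ σ) a = profile φ (a :: σ) := by
  refine Prod.ext (by simp [reverseDFA, profile]) (funext fun ψ => propext ?_)
  dsimp only [reverseDFA, profile]
  rw [satAt_cons_zero]
  refine satCons_congr fun χ hχ => ?_
  exact ⟨fun ⟨_, h⟩ => h, fun h => ⟨subformulas_subset_of_mem ψ.2 hχ, h⟩⟩

theorem reverseDFA_eval_reverse (φ : LTLf P) (π : List (Set P)) :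
    (reverseDFA φ).eval π.reverse = profile φ π := by
  induction π with
  | nil => rfl
  | cons a π ih => rw [List.reverse_cons, DFA.eval_append_singleton, ih, reverseDFA_step_profile]

theorem reverseDFA_accepts (φ : LTLf P) : (reverseDFA φ).accepts = φ.language.reverse := by
  ext π
  rw [DFA.mem_accepts, ← π.reverse_reverse, reverseDFA_eval_reverse, π.reverse_reverse]
  rfl

open Classical in
theorem isRegular_language (φ : LTLf P) : φ.language.IsRegular :=
  .of_reverse ⟨_, inferInstance, reverseDFA φ, reverseDFA_accepts φ⟩

end LTLf

theorem ltlf_language_regular_general {P : Type} (φ : LTLf P) :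
    ∃ (Q : Type) (_ : Fintype Q) (M : DFA (Set P) Q),
      ∀ π : List (Set P), π ∈ M.accepts ↔ (π ≠ [] ∧ LTLf.Sat π φ) := by
  obtain ⟨Q, _, M, hM⟩ := φ.isRegular_language
  exact ⟨Q, inferInstance, M, fun π => by rw [hM]; rfl⟩

/-- The language of every LTLf formula is regular: there is a DFA over the
alphabet `Set P`, with a finite state type, accepting exactly the nonempty
finite traces that satisfy `φ`. -/
theorem ltlf_language_regular {P : Type} [Fintype P] (φ : LTLf P) :
    ∃ (Q : Type) (_ : Fintype Q) (M : DFA (Set P) Q),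
      ∀ π : List (Set P), π ∈ M.accepts ↔ (π ≠ [] ∧ LTLf.Sat π φ) :=
  ltlf_language_regular_general φ
end

section
/- Determinacy of reachability/safety games (agent reachability): for every set T of nonempty finite words over A × B, exactly one of the following holds: (i) there exists an agent strategy enforcing Reach T; (ii) there exists an environment strategy enforcing Safe T', where T' is the set of nonempty finite words over A × B that are not in T. (Note that Safe T' is exactly the complement of Reach T in the space of infinite plays.) -/
/-- The first `k` letters of an infinite trace. -/
def pre {α : Type} (π : ℕ → α) (k : ℕ) : List α := (List.range k).map π

/-- The finite history of pairs of moves after `k` rounds. -/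
def playPrefix {A B : Type} (σag : List B → A) (σenv : List A → B) : ℕ → List (A × B)
  | 0 => []
  | k + 1 =>
      let h := playPrefix σag σenv k
      let a := σag (h.map Prod.snd)
      let b := σenv (h.map Prod.fst ++ [a])
      h ++ [(a, b)]

/-- The infinite play generated by an agent strategy `σag : List B → A`
(the agent moves first) and an environment strategy `σenv : List A → B`:
`a₀ = σag []`, `b₀ = σenv [a₀]`, `a_{i+1} = σag [b₀, …, b_i]`,
`b_{i+1} = σenv [a₀, …, a_{i+1}]`, and `play σag σenv i = (a_i, b_i)`. -/
def play {A B : Type} (σag : List B → A) (σenv : List A → B) (i : ℕ) : A × B :=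
  let h := playPrefix σag σenv i
  let a := σag (h.map Prod.snd)
  let b := σenv (h.map Prod.fst ++ [a])
  (a, b)

/-- Reachability property: some nonempty finite prefix is in `T`. -/
def Reach {A B : Type} (T : Set (List (A × B))) : Set (ℕ → A × B) :=
  {π | ∃ k, 1 ≤ k ∧ pre π k ∈ T}

/-- Safety property: every nonempty finite prefix is in `T`. -/
def Safe {A B : Type} (T : Set (List (A × B))) : Set (ℕ → A × B) :=
  {π | ∀ k, 1 ≤ k → pre π k ∈ T}

/-- The agent strategy `σag` enforces the property `P`. -/
def AgentEnforces {A B : Type} (σag : List B → A) (P : Set (ℕ → A × B)) : Prop :=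
  ∀ σenv : List A → B, play σag σenv ∈ P

/-- The environment strategy `σenv` enforces the property `P`. -/
def EnvEnforces {A B : Type} (σenv : List A → B) (P : Set (ℕ → A × B)) : Prop :=
  ∀ σag : List B → A, play σag σenv ∈ P

/-- The agent strategy `σag` enforces `Task` under the environment
specification `Env`. -/
def EnforcesUnder {A B : Type} (σag : List B → A) (Task Env : Set (ℕ → A × B)) : Prop :=
  ∀ σenv : List A → B, EnvEnforces σenv Env → play σag σenv ∈ Task

/-!
Finite branching of the environment makes the agent's attractor of the target set a union of
finite levels: from level `n + 1` the agent has a move after which every environment reply lands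
in level `n`, and level `0` is the target itself. If the empty history lies in the attractor, the
agent plays to decrease the level and must reach the target. Otherwise, again because `B` is
finite, against every agent move the environment has a reply that keeps the history outside the
attractor, so no nonempty prefix of the play ever lies in the target.
-/

section Plays

variable {A B : Type}

theorem playPrefix_succ (σag : List B → A) (σenv : List A → B) (k : ℕ) :
    playPrefix σag σenv (k + 1) = playPrefix σag σenv k ++ [play σag σenv k] :=
  rfl

theorem play_fst (σag : List B → A) (σenv : List A → B) (k : ℕ) :
    (play σag σenv k).1 = σag ((playPrefix σag σenv k).map Prod.snd) :=
  rfl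

theorem play_snd (σag : List B → A) (σenv : List A → B) (k : ℕ) :
    (play σag σenv k).2 = σenv ((playPrefix σag σenv k).map Prod.fst ++ [(play σag σenv k).1]) :=
  rfl

theorem length_playPrefix (σag : List B → A) (σenv : List A → B) (k : ℕ) :
    (playPrefix σag σenv k).length = k := by
  induction k with
  | zero => rfl
  | succ k ih => simp [playPrefix_succ, ih]

theorem pre_play (σag : List B → A) (σenv : List A → B) (k : ℕ) :
    pre (play σag σenv) k = playPrefix σag σenv k := by
  induction k with
  | zero => rfl
  | succ k ih => rw [playPrefix_succ, ← ih, pre, pre, List.range_succ, List.map_append]; rfl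

end Plays

section HistoryStrategies

/-! A player who knows the opponent's moves and its own rule can rebuild the whole history, so a
rule that reads the full history of pairs is realised by an actual strategy. -/

variable {A B : Type}

def agentHistory (f : List (A × B) → A) (bs : List B) : List (A × B) :=
  bs.foldl (fun h b => h ++ [(f h, b)]) []

def agentOfHistory (f : List (A × B) → A) (bs : List B) : A :=
  f (agentHistory f bs)

theorem agentHistory_playPrefix (f : List (A × B) → A) (σenv : List A → B) (k : ℕ) :
    agentHistory f ((playPrefix (agentOfHistory f) σenv k).map Prod.snd)
      = playPrefix (agentOfHistory f) σenv k := by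
  induction k with
  | zero => rfl
  | succ k ih =>
    rw [playPrefix_succ, List.map_append, agentHistory, List.foldl_append, ← agentHistory, ih]
    show _ ++ [(f _, _)] = _
    congr 2
    exact Prod.ext (congrArg f ih.symm) rfl

theorem play_agentOfHistory_fst (f : List (A × B) → A) (σenv : List A → B) (k : ℕ) :
    (play (agentOfHistory f) σenv k).1 = f (playPrefix (agentOfHistory f) σenv k) := by
  rw [play_fst, agentOfHistory, agentHistory_playPrefix]

def envHistory (g : List (A × B) → A → B) (as : List A) : List (A × B) :=
  as.foldl (fun h a => h ++ [(a, g h a)]) []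

/-- The environment is never asked to move on the empty list; there it answers arbitrarily. -/
noncomputable def envOfHistory [Nonempty B] (g : List (A × B) → A → B) (as : List A) : B :=
  (as.getLast?.map (g (envHistory g as.dropLast))).getD (Classical.arbitrary B)

theorem envOfHistory_concat [Nonempty B] (g : List (A × B) → A → B) (as : List A) (a : A) :
    envOfHistory g (as ++ [a]) = g (envHistory g as) a := by
  simp [envOfHistory]

theorem envHistory_playPrefix [Nonempty B] (g : List (A × B) → A → B) (σag : List B → A)
    (k : ℕ) :
    envHistory g ((playPrefix σag (envOfHistory g) k).map Prod.fst)
      = playPrefix σag (envOfHistory g) k := by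
  induction k with
  | zero => rfl
  | succ k ih =>
    rw [playPrefix_succ, List.map_append, envHistory, List.foldl_append, ← envHistory, ih]
    show _ ++ [(_, g _ _)] = _
    congr 2
    exact Prod.ext rfl (by rw [play_snd σag (envOfHistory g) k, envOfHistory_concat, ih])

theorem play_envOfHistory_snd [Nonempty B] (g : List (A × B) → A → B) (σag : List B → A)
    (k : ℕ) :
    (play σag (envOfHistory g) k).2
      = g (playPrefix σag (envOfHistory g) k) (play σag (envOfHistory g) k).1 := by
  rw [play_snd, envOfHistory_concat, envHistory_playPrefix]

end HistoryStrategies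

namespace ReachGame

variable {A B : Type}

/-- From history `h` the agent can force a nonempty history in `T` within `n` more rounds. -/
def WinsWithin (T : Set (List (A × B))) : ℕ → List (A × B) → Prop
  | 0, h => h ≠ [] ∧ h ∈ T
  | n + 1, h => WinsWithin T n h ∨ ∃ a, ∀ b, WinsWithin T n (h ++ [(a, b)])

/-- The agent's attractor of `T`. -/
def Winning (T : Set (List (A × B))) (h : List (A × B)) : Prop :=
  ∃ n, WinsWithin T n h

theorem WinsWithin.mono {T : Set (List (A × B))} {n m : ℕ} {h : List (A × B)}
    (hw : WinsWithin T n h) (hnm : n ≤ m) : WinsWithin T m h := by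
  induction hnm with
  | refl => exact hw
  | step _ ih => exact Or.inl ih

theorem Winning.nonempty_of_nil {T : Set (List (A × B))} (hw : Winning T []) : Nonempty A := by
  obtain ⟨n, hn⟩ := hw
  induction n with
  | zero => exact absurd rfl hn.1
  | succ n ih => exact hn.elim ih fun ⟨a, _⟩ => ⟨a⟩

theorem exists_not_winning_append [Finite B] {T : Set (List (A × B))} {h : List (A × B)}
    (hh : ¬ Winning T h) (a : A) : ∃ b, ¬ Winning T (h ++ [(a, b)]) := by
  by_contra! hall
  choose n hn using hall
  obtain ⟨N, hN⟩ := Set.finite_range n |>.bddAbove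
  exact hh ⟨N + 1, Or.inr ⟨a, fun b => (hn b).mono (hN ⟨b, rfl⟩)⟩⟩

noncomputable def rank (T : Set (List (A × B))) (h : List (A × B)) : ℕ :=
  sInf {n | WinsWithin T n h}

open Classical in
noncomputable def attractorMove [Nonempty A] (T : Set (List (A × B))) (h : List (A × B)) : A :=
  if hmove : ∃ a, ∀ b, WinsWithin T (rank T h - 1) (h ++ [(a, b)]) then hmove.choose
  else Classical.arbitrary A

theorem rank_append_attractorMove_lt [Nonempty A] {T : Set (List (A × B))} {h : List (A × B)}
    (hw : Winning T h) (hT : ¬ (h ≠ [] ∧ h ∈ T)) (b : B) :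
    Winning T (h ++ [(attractorMove T h, b)])
      ∧ rank T (h ++ [(attractorMove T h, b)]) < rank T h := by
  have hrank : WinsWithin T (rank T h) h := Nat.sInf_mem hw
  obtain ⟨m, hm⟩ : ∃ m, rank T h = m + 1 :=
    Nat.exists_eq_succ_of_ne_zero fun h0 => hT (by rwa [h0] at hrank)
  rw [hm] at hrank
  obtain hlow | hmove := hrank
  · exact absurd hlow (Nat.notMem_of_lt_sInf (show m < rank T h by omega))
  · rw [← Nat.add_sub_cancel m 1, ← hm] at hmove
    have hnext : WinsWithin T (rank T h - 1) (h ++ [(attractorMove T h, b)]) := by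
      rw [attractorMove, dif_pos hmove]
      exact hmove.choose_spec b
    exact ⟨⟨_, hnext⟩, (Nat.sInf_le hnext).trans_lt (by omega)⟩

theorem agentOfHistory_attractorMove_enforces_reach [Nonempty A] {T : Set (List (A × B))}
    (hw : Winning T []) : AgentEnforces (agentOfHistory (attractorMove T)) (Reach T) := by
  intro σenv
  set σag := agentOfHistory (attractorMove T)
  suffices ∀ n k, Winning T (playPrefix σag σenv k) → rank T (playPrefix σag σenv k) = n →
      ∃ m, playPrefix σag σenv m ≠ [] ∧ playPrefix σag σenv m ∈ T by
    obtain ⟨m, hne, hmT⟩ := this _ 0 hw rfl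
    refine ⟨m, ?_, by rwa [pre_play]⟩
    rw [← length_playPrefix σag σenv m]
    exact List.length_pos_iff.2 hne
  intro n
  induction n using Nat.strong_induction_on with
  | _ n ih =>
    rintro k hk rfl
    by_cases hT : playPrefix σag σenv k ≠ [] ∧ playPrefix σag σenv k ∈ T
    · exact ⟨k, hT⟩
    have hnext : playPrefix σag σenv (k + 1) = playPrefix σag σenv k
        ++ [(attractorMove T (playPrefix σag σenv k), (play σag σenv k).2)] := by
      rw [playPrefix_succ, ← play_agentOfHistory_fst (attractorMove T) σenv k]
    obtain ⟨hw', hlt⟩ := rank_append_attractorMove_lt hk hT (play σag σenv k).2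
    rw [← hnext] at hw' hlt
    exact ih _ hlt (k + 1) hw' rfl

open Classical in
noncomputable def trapMove [Nonempty B] (T : Set (List (A × B))) (h : List (A × B)) (a : A) : B :=
  if hb : ∃ b, ¬ Winning T (h ++ [(a, b)]) then hb.choose else Classical.arbitrary B

theorem not_winning_append_trapMove [Finite B] [Nonempty B] {T : Set (List (A × B))}
    {h : List (A × B)} (hh : ¬ Winning T h) (a : A) :
    ¬ Winning T (h ++ [(a, trapMove T h a)]) := by
  have hb := exists_not_winning_append hh a
  rw [trapMove, dif_pos hb]
  exact hb.choose_spec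

theorem envOfHistory_trapMove_enforces_safe [Finite B] [Nonempty B] {T : Set (List (A × B))}
    (hw : ¬ Winning T []) :
    EnvEnforces (envOfHistory (trapMove T)) (Safe {w : List (A × B) | w ≠ [] ∧ w ∉ T}) := by
  intro σag
  have htrap : ∀ k, ¬ Winning T (playPrefix σag (envOfHistory (trapMove T)) k) := by
    intro k
    induction k with
    | zero => exact hw
    | succ k ih =>
      rw [playPrefix_succ, ← Prod.mk.eta (p := play σag _ k),
        play_envOfHistory_snd]
      exact not_winning_append_trapMove ih _
  intro k hk
  rw [pre_play]
  have hne : playPrefix σag (envOfHistory (trapMove T)) k ≠ [] := by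
    rw [← List.length_pos_iff, length_playPrefix]
    exact hk
  exact ⟨hne, fun hT => htrap k ⟨0, hne, hT⟩⟩

end ReachGame

theorem disjoint_reach_safe_compl {A B : Type} (T : Set (List (A × B))) :
    Disjoint (Reach T) (Safe {w : List (A × B) | w ≠ [] ∧ w ∉ T}) :=
  Set.disjoint_left.2 fun _ ⟨k, hk, hT⟩ hsafe => (hsafe k hk).2 hT

open ReachGame in
theorem reach_safe_determinacy_agent_reach_general {A B : Type}
    [Fintype B] [Nonempty B]
    (T : Set (List (A × B))) :
    Xor' (∃ σag : List B → A, AgentEnforces σag (Reach T))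
      (∃ σenv : List A → B,
        EnvEnforces σenv (Safe {w : List (A × B) | w ≠ [] ∧ w ∉ T})) := by
  refine xor_iff_iff_not.2 ⟨fun ⟨σag, hag⟩ ⟨σenv, henv⟩ =>
    (disjoint_reach_safe_compl T).notMem_of_mem_left (hag σenv) (henv σag), fun henv => ?_⟩
  by_cases hw : Winning T []
  · have := hw.nonempty_of_nil
    exact ⟨agentOfHistory (attractorMove T), agentOfHistory_attractorMove_enforces_reach hw⟩
  · exact absurd ⟨envOfHistory (trapMove T), envOfHistory_trapMove_enforces_safe hw⟩ henv

/-- Determinacy of reachability games: for every set `T` of nonempty finite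
words over `A × B`, exactly one of the following holds: (i) some agent strategy
enforces `Reach T`; (ii) some environment strategy enforces `Safe T'`, where
`T'` is the set of nonempty finite words not in `T`. -/
theorem reach_safe_determinacy_agent_reach {A B : Type}
    [Fintype A] [Fintype B] [Nonempty A] [Nonempty B]
    (T : Set (List (A × B))) :
    Xor' (∃ σag : List B → A, AgentEnforces σag (Reach T))
      (∃ σenv : List A → B,
        EnvEnforces σenv (Safe {w : List (A × B) | w ≠ [] ∧ w ∉ T})) :=
  reach_safe_determinacy_agent_reach_general T
end

section
/- Determinacy of reachability/safety games (agent safety): for every set T of nonempty finite words over A × B, exactly one of the following holds: (i) there exists an agent strategy enforcing Safe T; (ii) there exists an environment strategy enforcing Reach T', where T' is the set of nonempty finite words over A × B that are not in T. -/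
/-!
The environment wins exactly from the histories at which it owns a well-founded strategy tree
(`ExitTree`) all of whose branches leave `T`. If there is no such tree at the empty history, then
the agent has a move after which, whatever the environment answers, the history stays in `T` and
there is still no tree; repeating this forever keeps every prefix of the play in `T`. If there is
such a tree, following it forces the play out of `T` after finitely many rounds, by induction on
the tree.
-/

section Determinacy

variable {A B : Type}

theorem pre_ne_nil {α : Type} (π : ℕ → α) {k : ℕ} (hk : 0 < k) : pre π k ≠ [] := by
  simpa [pre] using hk.ne'

/-- A choice function on histories becomes an agent strategy by replaying the history from the
environment's moves alone. -/
def agentReplay (f : List (A × B) → A) (bs : List B) : List (A × B) :=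
  bs.foldl (fun h b => h ++ [(f h, b)]) []

def agentStrategy (f : List (A × B) → A) (bs : List B) : A :=
  f (agentReplay f bs)

theorem agentReplay_playPrefix (f : List (A × B) → A) (σenv : List A → B) (k : ℕ) :
    agentReplay f ((playPrefix (agentStrategy f) σenv k).map Prod.snd) =
      playPrefix (agentStrategy f) σenv k := by
  induction k with
  | zero => rfl
  | succ k ih =>
    have hfst : (play (agentStrategy f) σenv k).1 = f (playPrefix (agentStrategy f) σenv k) :=
      congrArg f ih
    rw [playPrefix_succ, List.map_append, agentReplay, List.foldl_append, ← agentReplay, ih]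
    simp only [List.map_cons, List.map_nil, List.foldl_cons, List.foldl_nil, ← hfst]

theorem playPrefix_agentStrategy_succ (f : List (A × B) → A) (σenv : List A → B) (k : ℕ) :
    playPrefix (agentStrategy f) σenv (k + 1) =
      playPrefix (agentStrategy f) σenv k ++
        [(f (playPrefix (agentStrategy f) σenv k), (play (agentStrategy f) σenv k).2)] := by
  rw [playPrefix_succ, ← agentReplay_playPrefix f σenv k]
  rfl

theorem exists_agentEnforces_safe_of_invariant (T : Set (List (A × B)))
    (P : List (A × B) → Prop) (h₀ : P [])
    (hstep : ∀ h, P h → ∃ a, ∀ b, h ++ [(a, b)] ∈ T ∧ P (h ++ [(a, b)])) :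
    ∃ σag : List B → A, AgentEnforces σag (Safe T) := by
  obtain ⟨a₀, -⟩ := hstep [] h₀
  have : Nonempty A := ⟨a₀⟩
  let f (h : List (A × B)) : A :=
    Classical.epsilon fun a => ∀ b, h ++ [(a, b)] ∈ T ∧ P (h ++ [(a, b)])
  have hf : ∀ h, P h → ∀ b, h ++ [(f h, b)] ∈ T ∧ P (h ++ [(f h, b)]) :=
    fun h hP => Classical.epsilon_spec (hstep h hP)
  refine ⟨agentStrategy f, fun σenv => ?_⟩
  have hP : ∀ k, P (playPrefix (agentStrategy f) σenv k) := by
    intro k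
    induction k with
    | zero => exact h₀
    | succ k ih => rw [playPrefix_agentStrategy_succ]; exact (hf _ ih _).2
  rintro (_ | k) hk
  · omega
  · rw [pre_play, playPrefix_agentStrategy_succ]
    exact (hf _ (hP k) _).1

/-- A strategy of the environment forcing the play from `h` out of `T`: a response `b a` to each
agent move `a`, and a subtree wherever the extended history is still in `T`. A mere predicate
"the environment can force an exit from `h`" would not do: choosing any witness at each history
need not make the play leave `T`, whereas walking down one fixed tree must. -/
inductive ExitTree (T : Set (List (A × B))) : List (A × B) → Type
  | node (h : List (A × B)) (b : A → B)
      (next : ∀ a, h ++ [(a, b a)] ∈ T → ExitTree T (h ++ [(a, b a)])) : ExitTree T h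

theorem exists_safe_move_of_isEmpty_exitTree {T : Set (List (A × B))} {h : List (A × B)}
    (hh : IsEmpty (ExitTree T h)) :
    ∃ a, ∀ b, h ++ [(a, b)] ∈ T ∧ IsEmpty (ExitTree T (h ++ [(a, b)])) := by
  by_contra hc
  simp only [not_exists, not_forall, not_and, not_isEmpty_iff] at hc
  choose b hb using hc
  exact hh.false (.node h b fun a ha => Classical.choice (hb a ha))

namespace ExitTree

variable [Nonempty B] {T : Set (List (A × B))}

open scoped Classical in
noncomputable def respond : {h : List (A × B)} → ExitTree T h → List A → B
  | _, node _ b _, [a] => b a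
  | _, node h b next, a :: a' :: as =>
      if ha : h ++ [(a, b a)] ∈ T then (next a ha).respond (a' :: as) else Classical.arbitrary B
  | _, _, [] => Classical.arbitrary B

theorem exists_exit (σag : List B → A) (σenv : List A → B) {h : List (A × B)}
    (t : ExitTree T h) (k : ℕ) (hk : playPrefix σag σenv k = h)
    (hσ : ∀ a as, σenv (h.map Prod.fst ++ a :: as) = t.respond (a :: as)) :
    ∃ j, k < j ∧ playPrefix σag σenv j ∉ T := by
  induction t generalizing k with
  | node h b next ih =>
    have hsnd : (play σag σenv k).2 = b (play σag σenv k).1 := by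
      subst hk
      exact hσ _ []
    have hsucc : playPrefix σag σenv (k + 1) =
        h ++ [((play σag σenv k).1, b (play σag σenv k).1)] := by
      rw [playPrefix_succ, hk, ← hsnd]
    set a := (play σag σenv k).1
    by_cases ha : h ++ [(a, b a)] ∈ T
    · obtain ⟨j, hj, hjT⟩ := ih a ha (k + 1) hsucc fun a' as => by
        simpa [respond, ha] using hσ a (a' :: as)
      exact ⟨j, by omega, hjT⟩
    · exact ⟨k + 1, k.lt_succ_self, hsucc ▸ ha⟩

theorem envEnforces_reach (t : ExitTree T []) :
    EnvEnforces t.respond (Reach {w : List (A × B) | w ≠ [] ∧ w ∉ T}) := fun σag => by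
  obtain ⟨j, hj, hjT⟩ := t.exists_exit σag t.respond 0 rfl fun _ _ => rfl
  exact ⟨j, hj, pre_ne_nil _ hj, by rwa [pre_play]⟩

end ExitTree

theorem not_agentEnforces_safe_and_envEnforces_reach {T : Set (List (A × B))}
    {σag : List B → A} (hag : AgentEnforces σag (Safe T)) {σenv : List A → B}
    (henv : EnvEnforces σenv (Reach {w : List (A × B) | w ≠ [] ∧ w ∉ T})) : False := by
  obtain ⟨k, hk, -, hkT⟩ := henv σag
  exact hkT (hag σenv k hk)

end Determinacy

theorem reach_safe_determinacy_agent_safe_general {A B : Type}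
    [Nonempty B]
    (T : Set (List (A × B))) :
    Xor' (∃ σag : List B → A, AgentEnforces σag (Safe T))
      (∃ σenv : List A → B,
        EnvEnforces σenv (Reach {w : List (A × B) | w ≠ [] ∧ w ∉ T})) := by
  by_cases ht : Nonempty (ExitTree T [])
  · obtain ⟨t⟩ := ht
    refine Or.inr ⟨⟨t.respond, t.envEnforces_reach⟩, fun ⟨σag, hag⟩ => ?_⟩
    exact not_agentEnforces_safe_and_envEnforces_reach hag t.envEnforces_reach
  · obtain ⟨σag, hag⟩ := exists_agentEnforces_safe_of_invariant T
      (fun h => IsEmpty (ExitTree T h)) (not_nonempty_iff.mp ht)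
      fun _ => exists_safe_move_of_isEmpty_exitTree
    refine Or.inl ⟨⟨σag, hag⟩, fun ⟨σenv, henv⟩ => ?_⟩
    exact not_agentEnforces_safe_and_envEnforces_reach hag henv

/-- Determinacy of safety games: for every set `T` of nonempty finite words
over `A × B`, exactly one of the following holds: (i) some agent strategy
enforces `Safe T`; (ii) some environment strategy enforces `Reach T'`, where
`T'` is the set of nonempty finite words not in `T`. -/
theorem reach_safe_determinacy_agent_safe {A B : Type}
    [Fintype A] [Fintype B] [Nonempty A] [Nonempty B]
    (T : Set (List (A × B))) :
    Xor' (∃ σag : List B → A, AgentEnforces σag (Safe T))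
      (∃ σenv : List A → B,
        EnvEnforces σenv (Reach {w : List (A × B) | w ≠ [] ∧ w ∉ T})) :=
  reach_safe_determinacy_agent_safe_general T
end

section
/- Determinacy of the combined reachability/safety games considered in the paper: for all sets T₁, T₂, T₃, T₄ of nonempty finite words over A × B, letting P := Reach T₁ ∪ Safe T₂ ∪ (Reach T₃ ∩ Safe T₄) ⊆ (ℕ → A × B), exactly one of the following holds: (i) there exists an agent strategy enforcing P; (ii) there exists an environment strategy enforcing the complement of P. -/
/-!
Nested attractors. `AgentWins₁` is the agent's attractor of a `T₁`-hit; `EnvBreaks₂₄` is the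
environment's attractor, avoiding `AgentWins₁`, of a violation of both `T₂` and `T₄`;
`AgentWins₁₃` is the agent's attractor of "`T₁` is hit, or `T₃` is hit outside `EnvBreaks₂₄`";
`EnvWins` is the environment's attractor, avoiding `AgentWins₁₃`, of a `T₂`-violation.

If the empty history lies in `EnvWins`, the environment plays towards a `T₂`-violation and,
once `T₃` is hit, towards violating both `T₂` and `T₄`, never letting the play into `AgentWins₁`,
so `T₁` is never hit. Otherwise the agent follows the attractor strategies inside `AgentWins₁`
and `AgentWins₁₃` and elsewhere keeps out of the environment's attractors: outside all four
regions `T₂` holds forever, and after a `T₃`-hit outside `EnvBreaks₂₄` one of `T₂`, `T₄` holds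
forever. As `A` and `B` are finite, attractors are reached within a bounded number of rounds,
so ℕ-indexed levels suffice.
-/

namespace ReachSafeGame

section Prefixes

variable {α : Type}

theorem pre_succ (π : ℕ → α) (k : ℕ) : pre π (k + 1) = pre π k ++ [π k] := by
  simp [pre, List.range_succ]

theorem length_pre (π : ℕ → α) (k : ℕ) : (pre π k).length = k := by
  simp [pre]

theorem take_pre (π : ℕ → α) {j k : ℕ} (h : j ≤ k) : (pre π k).take j = pre π j := by
  simp [pre, ← List.map_take, List.take_range, Nat.min_eq_left h]

theorem pre_prefix_pre (π : ℕ → α) {j k : ℕ} (h : j ≤ k) : pre π j <+: pre π k :=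
  take_pre π h ▸ List.take_prefix j _

theorem eq_pre_length_of_prefix {π : ℕ → α} {p : List α} {k : ℕ} (h : p <+: pre π k) :
    p = pre π p.length :=
  calc p = (pre π k).take p.length := List.prefix_iff_eq_take.1 h
    _ = pre π p.length := take_pre π (h.length_le.trans_eq (length_pre π k))

def Hits (T : Set (List α)) (h : List α) : Prop :=
  ∃ p ∈ T, p ≠ [] ∧ p <+: h

def Keeps (T : Set (List α)) (h : List α) : Prop :=
  ∀ p, p ≠ [] → p <+: h → p ∈ T

variable {T : Set (List α)} {h h' : List α}

theorem Hits.mono (hT : Hits T h) (hh : h <+: h') : Hits T h' :=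
  let ⟨p, hp, hne, hph⟩ := hT
  ⟨p, hp, hne, hph.trans hh⟩

theorem Keeps.anti (hT : Keeps T h') (hh : h <+: h') : Keeps T h :=
  fun p hne hph => hT p hne (hph.trans hh)

theorem not_hits_nil : ¬Hits T [] :=
  fun ⟨_, _, hne, hp⟩ => hne (List.prefix_nil.1 hp)

theorem monotone_hits_pre (π : ℕ → α) : Monotone fun k => Hits T (pre π k) :=
  fun _ _ hjk hT => hT.mono (pre_prefix_pre π hjk)

theorem antitone_keeps_pre (π : ℕ → α) : Antitone fun k => Keeps T (pre π k) :=
  fun _ _ hjk hT => hT.anti (pre_prefix_pre π hjk)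

end Prefixes

section ReachSafe

variable {A B : Type} {T : Set (List (A × B))} {π : ℕ → A × B}

theorem mem_reach_iff : π ∈ Reach T ↔ ∃ k, Hits T (pre π k) := by
  constructor
  · rintro ⟨k, hk, hT⟩
    exact ⟨k, pre π k, hT, List.ne_nil_of_length_pos (by rwa [length_pre]), List.prefix_refl _⟩
  · rintro ⟨k, p, hT, hne, hp⟩
    rw [eq_pre_length_of_prefix hp] at hT
    exact ⟨p.length, List.length_pos_of_ne_nil hne, hT⟩

theorem mem_safe_iff : π ∈ Safe T ↔ ∀ k, Keeps T (pre π k) := by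
  constructor
  · intro hπ k p hne hp
    rw [eq_pre_length_of_prefix hp]
    exact hπ _ (List.length_pos_of_ne_nil hne)
  · intro hπ k hk
    exact hπ k _ (List.ne_nil_of_length_pos (by rwa [length_pre])) (List.prefix_refl _)

end ReachSafe

theorem forall_or_forall_of_eventually_or {p q : ℕ → Prop} (hp : Antitone p) (hq : Antitone q)
    {k : ℕ} (h : ∀ j ≥ k, p j ∨ q j) : (∀ j, p j) ∨ (∀ j, q j) := by
  by_contra! hc
  obtain ⟨⟨i, hi⟩, ⟨i', hi'⟩⟩ := hc
  rcases h (max k (max i i')) (le_max_left _ _) with hj | hj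
  · exact hi (hp (le_max_of_le_right (le_max_left _ _)) hj)
  · exact hi' (hq (le_max_of_le_right (le_max_right _ _)) hj)

theorem exists_uniform_witness {X : Type} [Nonempty X] {p : ℕ → X → Prop}
    (hp : ∀ x, Monotone fun n => p n x) : ∃ x, ∀ n, (∃ y, p n y) → p n x := by
  classical
  by_cases hex : ∃ n y, p n y
  · obtain ⟨x, hx⟩ := Nat.find_spec hex
    exact ⟨x, fun n hn => hp x (Nat.find_min' hex hn) hx⟩
  · exact ⟨Classical.arbitrary X, fun n ⟨y, hy⟩ => absurd ⟨n, y, hy⟩ hex⟩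

section Attractors

variable {A B : Type}

def AgentAttrIn (G : List (A × B) → Prop) : ℕ → List (A × B) → Prop
  | 0, h => G h
  | n + 1, h => G h ∨ ∃ a, ∀ b, AgentAttrIn G n (h ++ [(a, b)])

def AgentAttr (G : List (A × B) → Prop) (h : List (A × B)) : Prop :=
  ∃ n, AgentAttrIn G n h

def EnvAttrIn (C G : List (A × B) → Prop) : ℕ → List (A × B) → Prop
  | 0, h => C h ∧ G h
  | n + 1, h => C h ∧ (G h ∨ ∀ a, ∃ b, EnvAttrIn C G n (h ++ [(a, b)]))

def EnvAttr (C G : List (A × B) → Prop) (h : List (A × B)) : Prop :=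
  ∃ n, EnvAttrIn C G n h

variable {C G G' : List (A × B) → Prop} {h : List (A × B)}

theorem monotone_agentAttrIn (h : List (A × B)) : Monotone fun n => AgentAttrIn G n h := by
  refine monotone_nat_of_le_succ fun n => ?_
  induction n generalizing h with
  | zero => exact fun hG => Or.inl hG
  | succ n ih => exact Or.imp_right fun ⟨a, ha⟩ => ⟨a, fun b => ih _ (ha b)⟩

theorem AgentAttrIn.mono_goal (hGG' : ∀ h, G h → G' h) :
    ∀ {n h}, AgentAttrIn G n h → AgentAttrIn G' n h
  | 0, h, hA => hGG' h hA
  | _ + 1, h, hA => hA.imp (hGG' h) fun ⟨a, ha⟩ => ⟨a, fun b => (ha b).mono_goal hGG'⟩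

theorem AgentAttr.mono_goal (hGG' : ∀ h, G h → G' h) (hA : AgentAttr G h) : AgentAttr G' h :=
  let ⟨n, hn⟩ := hA
  ⟨n, hn.mono_goal hGG'⟩

theorem EnvAttrIn.constraint {n : ℕ} (hE : EnvAttrIn C G n h) : C h := by
  cases n <;> exact hE.1

theorem EnvAttr.constraint (hE : EnvAttr C G h) : C h :=
  let ⟨_, hn⟩ := hE
  hn.constraint

theorem monotone_envAttrIn (h : List (A × B)) : Monotone fun n => EnvAttrIn C G n h := by
  refine monotone_nat_of_le_succ fun n => ?_
  induction n generalizing h with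
  | zero => exact fun hE => ⟨hE.1, Or.inl hE.2⟩
  | succ n ih =>
    exact And.imp_right (Or.imp_right fun ha a => (ha a).imp fun b => ih _)

theorem not_agentAttr_append [Finite B] (hA : ¬AgentAttr G h) (a : A) :
    ∃ b, ¬AgentAttr G (h ++ [(a, b)]) := by
  by_contra! hb
  have : ∀ᶠ n in Filter.atTop, ∀ b, AgentAttrIn G n (h ++ [(a, b)]) :=
    Filter.eventually_all.2 fun b =>
      let ⟨n, hn⟩ := hb b
      Filter.eventually_atTop.2 ⟨n, fun _ hm => monotone_agentAttrIn _ hm hn⟩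
  obtain ⟨n, hn⟩ := this.exists
  exact hA ⟨n + 1, Or.inr ⟨a, hn⟩⟩

theorem not_envAttr_append [Finite A] (hE : ¬EnvAttr C G h) (hC : C h) :
    ∃ a, ∀ b, ¬EnvAttr C G (h ++ [(a, b)]) := by
  by_contra! ha
  have : ∀ᶠ n in Filter.atTop, ∀ a, ∃ b, EnvAttrIn C G n (h ++ [(a, b)]) :=
    Filter.eventually_all.2 fun a =>
      let ⟨b, n, hn⟩ := ha a
      Filter.eventually_atTop.2 ⟨n, fun _ hm => ⟨b, monotone_envAttrIn _ hm hn⟩⟩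
  obtain ⟨n, hn⟩ := this.exists
  exact hE ⟨n + 1, hC, Or.inr hn⟩

end Attractors

section Moves

variable {A B : Type} {C D G : List (A × B) → Prop} {h : List (A × B)}

theorem exists_agentAttr_move [Nonempty A] (G : List (A × B) → Prop) (h : List (A × B)) :
    ∃ a, ∀ n, (∃ a', ∀ b, AgentAttrIn G n (h ++ [(a', b)])) →
      ∀ b, AgentAttrIn G n (h ++ [(a, b)]) :=
  exists_uniform_witness fun _ _ _ hmn ha b => monotone_agentAttrIn _ hmn (ha b)

noncomputable def agentAttrMove [Nonempty A] (G : List (A × B) → Prop) (h : List (A × B)) : A :=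
  (exists_agentAttr_move G h).choose

theorem agentAttrIn_agentAttrMove [Nonempty A] {n : ℕ} (hA : AgentAttrIn G (n + 1) h)
    (hG : ¬G h) (b : B) : AgentAttrIn G n (h ++ [(agentAttrMove G h, b)]) :=
  (exists_agentAttr_move G h).choose_spec n (hA.resolve_left hG) b

noncomputable def avoidEnvAttr [Nonempty A] (C G : List (A × B) → Prop) (h : List (A × B)) : A :=
  Classical.epsilon fun a => ∀ b, ¬EnvAttr C G (h ++ [(a, b)])

theorem not_envAttr_avoidEnvAttr [Finite A] [Nonempty A] (hE : ¬EnvAttr C G h) (hC : C h)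
    (b : B) : ¬EnvAttr C G (h ++ [(avoidEnvAttr C G h, b)]) :=
  Classical.epsilon_spec (not_envAttr_append hE hC) b

theorem exists_envAttr_move [Nonempty B] (C G : List (A × B) → Prop) (h : List (A × B)) (a : A) :
    ∃ b, ∀ n, (∃ b', EnvAttrIn C G n (h ++ [(a, b')])) → EnvAttrIn C G n (h ++ [(a, b)]) :=
  exists_uniform_witness fun _ _ _ hmn hb => monotone_envAttrIn _ hmn hb

noncomputable def envAttrMove [Nonempty B] (C G : List (A × B) → Prop) (h : List (A × B))
    (a : A) : B :=
  (exists_envAttr_move C G h a).choose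

theorem envAttrIn_envAttrMove [Nonempty B] {n : ℕ} (hE : EnvAttrIn C G (n + 1) h) (hG : ¬G h)
    (a : A) : EnvAttrIn C G n (h ++ [(a, envAttrMove C G h a)]) :=
  (exists_envAttr_move C G h a).choose_spec n ((hE.2.resolve_left hG) a)

noncomputable def avoidAgentAttr [Nonempty B] (D : List (A × B) → Prop) (h : List (A × B))
    (a : A) : B :=
  Classical.epsilon fun b => ¬AgentAttr D (h ++ [(a, b)])

theorem not_agentAttr_avoidAgentAttr [Finite B] [Nonempty B] (hA : ¬AgentAttr D h) (a : A) :
    ¬AgentAttr D (h ++ [(a, avoidAgentAttr D h a)]) :=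
  Classical.epsilon_spec (not_agentAttr_append hA a)

open Classical in
noncomputable def envMove [Nonempty B] (D G : List (A × B) → Prop) (h : List (A × B))
    (a : A) : B :=
  if G h then avoidAgentAttr D h a else envAttrMove (fun h => ¬AgentAttr D h) G h a

theorem envAttrIn_envMove [Nonempty B] {n : ℕ}
    (hE : EnvAttrIn (fun h => ¬AgentAttr D h) G (n + 1) h) (hG : ¬G h) (a : A) :
    EnvAttrIn (fun h => ¬AgentAttr D h) G n (h ++ [(a, envMove D G h a)]) := by
  rw [envMove, if_neg hG]
  exact envAttrIn_envAttrMove hE hG a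

theorem envAttr_envMove [Finite B] [Nonempty B] (hG : ∀ h p, G h → G (h ++ [p]))
    (hE : EnvAttr (fun h => ¬AgentAttr D h) G h) (a : A) :
    EnvAttr (fun h => ¬AgentAttr D h) G (h ++ [(a, envMove D G h a)]) := by
  by_cases hGh : G h
  · rw [envMove, if_pos hGh]
    exact ⟨0, not_agentAttr_avoidAgentAttr hE.constraint a, hG _ _ hGh⟩
  · obtain ⟨n, hn⟩ := hE
    cases n with
    | zero => exact absurd hn.2 hGh
    | succ n => exact ⟨n, envAttrIn_envMove hn hGh a⟩

end Moves

section Following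

variable {A B : Type} {D G : List (A × B) → Prop} {π : ℕ → A × B}

theorem pre_succ_pair (π : ℕ → A × B) (k : ℕ) :
    pre π (k + 1) = pre π k ++ [((π k).1, (π k).2)] :=
  pre_succ π k

theorem exists_goal_of_agentAttrMove [Nonempty A]
    (hπ : ∀ k, AgentAttr G (pre π k) → ¬G (pre π k) → (π k).1 = agentAttrMove G (pre π k))
    {k : ℕ} (hk : AgentAttr G (pre π k)) : ∃ j, G (pre π j) := by
  obtain ⟨n, hn⟩ := hk
  induction n generalizing k with
  | zero => exact ⟨k, hn⟩
  | succ n ih =>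
    by_cases hG : G (pre π k)
    · exact ⟨k, hG⟩
    refine ih (k := k + 1) ?_
    rw [pre_succ_pair, hπ k ⟨n + 1, hn⟩ hG]
    exact agentAttrIn_agentAttrMove hn hG _

theorem exists_goal_of_envMove [Nonempty B] {k : ℕ}
    (hπ : ∀ j ≥ k, (π j).2 = envMove D G (pre π j) (π j).1)
    (hk : EnvAttr (fun h => ¬AgentAttr D h) G (pre π k)) : ∃ j, G (pre π j) := by
  obtain ⟨n, hn⟩ := hk
  induction n generalizing k with
  | zero => exact ⟨k, hn.2⟩
  | succ n ih =>
    by_cases hG : G (pre π k)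
    · exact ⟨k, hG⟩
    refine ih (k := k + 1) (fun j hj => hπ j (by omega)) ?_
    rw [pre_succ_pair, hπ k le_rfl]
    exact envAttrIn_envMove hn hG _

end Following

section Realization

variable {A B : Type}

theorem pre_play (σag : List B → A) (σenv : List A → B) (k : ℕ) :
    pre (play σag σenv) k = playPrefix σag σenv k := by
  induction k with
  | zero => rfl
  | succ k ih => rw [pre_succ, ih]; rfl

theorem play_fst (σag : List B → A) (σenv : List A → B) (k : ℕ) :
    (play σag σenv k).1 = σag ((pre (play σag σenv) k).map Prod.snd) := by
  rw [pre_play]; rfl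

theorem play_snd (σag : List B → A) (σenv : List A → B) (k : ℕ) :
    (play σag σenv k).2 = σenv ((pre (play σag σenv) k).map Prod.fst ++ [(play σag σenv k).1]) := by
  rw [pre_play]; rfl

def agentHistory (τ : List (A × B) → A) (bs : List B) : List (A × B) :=
  bs.foldl (fun h b => h ++ [(τ h, b)]) []

theorem agentHistory_concat (τ : List (A × B) → A) (bs : List B) (b : B) :
    agentHistory τ (bs ++ [b]) = agentHistory τ bs ++ [(τ (agentHistory τ bs), b)] := by
  simp [agentHistory]

def agentOf (τ : List (A × B) → A) (bs : List B) : A :=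
  τ (agentHistory τ bs)

theorem play_agentOf_fst (τ : List (A × B) → A) (σenv : List A → B) (k : ℕ) :
    (play (agentOf τ) σenv k).1 = τ (pre (play (agentOf τ) σenv) k) := by
  set π := play (agentOf τ) σenv
  have hist : ∀ k, agentHistory τ ((pre π k).map Prod.snd) = pre π k := by
    intro k
    induction k with
    | zero => rfl
    | succ k ih =>
      have hfst : (π k).1 = τ (pre π k) := by
        rw [← ih]; exact play_fst _ _ k
      rw [pre_succ, List.map_append, List.map_singleton, agentHistory_concat, ih, ← hfst]
  rw [play_fst, agentOf, hist]

def envHistory (υ : List (A × B) → A → B) (as : List A) : List (A × B) :=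
  as.foldl (fun h a => h ++ [(a, υ h a)]) []

theorem envHistory_concat (υ : List (A × B) → A → B) (as : List A) (a : A) :
    envHistory υ (as ++ [a]) = envHistory υ as ++ [(a, υ (envHistory υ as) a)] := by
  simp [envHistory]

-- The default is only read on the empty list, to which the environment never has to answer.
noncomputable def envOf [Nonempty B] (υ : List (A × B) → A → B) (as : List A) : B :=
  ((envHistory υ as).getLast?.map Prod.snd).getD (Classical.arbitrary B)

theorem envOf_concat [Nonempty B] (υ : List (A × B) → A → B) (as : List A) (a : A) :
    envOf υ (as ++ [a]) = υ (envHistory υ as) a := by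
  simp [envOf, envHistory_concat]

theorem play_envOf_snd [Nonempty B] (υ : List (A × B) → A → B) (σag : List B → A) (k : ℕ) :
    (play σag (envOf υ) k).2 = υ (pre (play σag (envOf υ)) k) (play σag (envOf υ) k).1 := by
  set π := play σag (envOf υ)
  have hist : ∀ k, envHistory υ ((pre π k).map Prod.fst) = pre π k := by
    intro k
    induction k with
    | zero => rfl
    | succ k ih =>
      have hsnd : (π k).2 = υ (pre π k) (π k).1 := by
        rw [← ih, ← envOf_concat υ]; exact play_snd _ _ k
      rw [pre_succ, List.map_append, List.map_singleton, envHistory_concat, ih, ← hsnd]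
  rw [play_snd, envOf_concat, hist]

end Realization

section Game

variable {A B : Type} (T₁ T₂ T₃ T₄ : Set (List (A × B)))

def AgentWins₁ (h : List (A × B)) : Prop :=
  AgentAttr (Hits T₁) h

def EnvBreaks₂₄ (h : List (A × B)) : Prop :=
  EnvAttr (fun h => ¬AgentWins₁ T₁ h) (fun h => ¬Keeps T₂ h ∧ ¬Keeps T₄ h) h

def Secures₃ (h : List (A × B)) : Prop :=
  Hits T₃ h ∧ ¬EnvBreaks₂₄ T₁ T₂ T₄ h

def AgentWins₁₃ (h : List (A × B)) : Prop :=
  AgentAttr (fun h => Hits T₁ h ∨ Secures₃ T₁ T₂ T₃ T₄ h) h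

def EnvWins (h : List (A × B)) : Prop :=
  EnvAttr (fun h => ¬AgentWins₁₃ T₁ T₂ T₃ T₄ h) (fun h => ¬Keeps T₂ h) h

open Classical in
noncomputable def agentStrategy [Nonempty A] (h : List (A × B)) : A :=
  if AgentWins₁ T₁ h then agentAttrMove (Hits T₁) h
  else if Secures₃ T₁ T₂ T₃ T₄ h then
    avoidEnvAttr (fun h => ¬AgentWins₁ T₁ h) (fun h => ¬Keeps T₂ h ∧ ¬Keeps T₄ h) h
  else if AgentWins₁₃ T₁ T₂ T₃ T₄ h then
    agentAttrMove (fun h => Hits T₁ h ∨ Secures₃ T₁ T₂ T₃ T₄ h) h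
  else avoidEnvAttr (fun h => ¬AgentWins₁₃ T₁ T₂ T₃ T₄ h) (fun h => ¬Keeps T₂ h) h

open Classical in
noncomputable def envStrategy [Nonempty B] (h : List (A × B)) (a : A) : B :=
  if Hits T₃ h then envMove (Hits T₁) (fun h => ¬Keeps T₂ h ∧ ¬Keeps T₄ h) h a
  else envMove (fun h => Hits T₁ h ∨ Secures₃ T₁ T₂ T₃ T₄ h) (fun h => ¬Keeps T₂ h) h a

def EnvInvariant (h : List (A × B)) : Prop :=
  (Hits T₃ h → EnvBreaks₂₄ T₁ T₂ T₄ h) ∧ (¬Hits T₃ h → EnvWins T₁ T₂ T₃ T₄ h)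

variable {T₁ T₂ T₃ T₄} {h : List (A × B)}

theorem agentWins₁₃_of_agentWins₁ (h1 : AgentWins₁ T₁ h) : AgentWins₁₃ T₁ T₂ T₃ T₄ h :=
  AgentAttr.mono_goal (fun _ => Or.inl) h1

theorem secures₃_append [Finite A] [Nonempty A] (h1 : ¬AgentWins₁ T₁ h)
    (h3 : Secures₃ T₁ T₂ T₃ T₄ h) (b : B) :
    Secures₃ T₁ T₂ T₃ T₄ (h ++ [(agentStrategy T₁ T₂ T₃ T₄ h, b)]) := by
  rw [agentStrategy, if_neg h1, if_pos h3]
  exact ⟨h3.1.mono (List.prefix_append _ _), not_envAttr_avoidEnvAttr h3.2 h1 b⟩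

theorem keeps_or_keeps_of_secures₃ (h1 : ¬AgentWins₁ T₁ h) (h3 : Secures₃ T₁ T₂ T₃ T₄ h) :
    Keeps T₂ h ∨ Keeps T₄ h := by
  by_contra hk
  exact h3.2 ⟨0, h1, not_or.1 hk⟩

theorem not_envWins_append [Finite A] [Nonempty A] (h13 : ¬AgentWins₁₃ T₁ T₂ T₃ T₄ h)
    (hE : ¬EnvWins T₁ T₂ T₃ T₄ h) (b : B) :
    ¬EnvWins T₁ T₂ T₃ T₄ (h ++ [(agentStrategy T₁ T₂ T₃ T₄ h, b)]) := by
  have h1 : ¬AgentWins₁ T₁ h := fun h1 => h13 (agentWins₁₃_of_agentWins₁ h1)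
  have h3 : ¬Secures₃ T₁ T₂ T₃ T₄ h := fun h3 => h13 ⟨0, Or.inr h3⟩
  rw [agentStrategy, if_neg h1, if_neg h3, if_neg h13]
  exact not_envAttr_avoidEnvAttr hE h13 b

theorem keeps₂_of_not_envWins (h13 : ¬AgentWins₁₃ T₁ T₂ T₃ T₄ h)
    (hE : ¬EnvWins T₁ T₂ T₃ T₄ h) : Keeps T₂ h :=
  not_not.1 fun h2 => hE ⟨0, h13, h2⟩

theorem envInvariant_append [Finite B] [Nonempty B] (hI : EnvInvariant T₁ T₂ T₃ T₄ h) (a : A) :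
    EnvInvariant T₁ T₂ T₃ T₄ (h ++ [(a, envStrategy T₁ T₂ T₃ T₄ h a)]) := by
  by_cases h3 : Hits T₃ h
  · have h24 : EnvBreaks₂₄ T₁ T₂ T₄ (h ++ [(a, envStrategy T₁ T₂ T₃ T₄ h a)]) := by
      rw [envStrategy, if_pos h3]
      exact envAttr_envMove (fun _ _ hb => ⟨fun hk => hb.1 (hk.anti (List.prefix_append _ _)),
        fun hk => hb.2 (hk.anti (List.prefix_append _ _))⟩) (hI.1 h3) a
    exact ⟨fun _ => h24, fun hn => absurd (h3.mono (List.prefix_append _ _)) hn⟩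
  · have hE : EnvWins T₁ T₂ T₃ T₄ (h ++ [(a, envStrategy T₁ T₂ T₃ T₄ h a)]) := by
      rw [envStrategy, if_neg h3]
      exact envAttr_envMove (fun _ _ hb hk => hb (hk.anti (List.prefix_append _ _))) (hI.2 h3) a
    -- a `T₃`-hit outside `EnvBreaks₂₄` would put the play into `AgentWins₁₃`
    exact ⟨fun h3' => not_not.1 fun h24 => hE.constraint ⟨0, Or.inr ⟨h3', h24⟩⟩, fun _ => hE⟩

theorem not_hits₁_of_envInvariant (hI : EnvInvariant T₁ T₂ T₃ T₄ h) : ¬Hits T₁ h := by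
  intro h1
  by_cases h3 : Hits T₃ h
  · exact (hI.1 h3).constraint ⟨0, h1⟩
  · exact (hI.2 h3).constraint ⟨0, Or.inl h1⟩

end Game

section Plays

variable {A B : Type} {T₁ T₂ T₃ T₄ : Set (List (A × B))} {π : ℕ → A × B}

theorem mem_of_secures₃ [Finite A] [Nonempty A]
    (hπ : ∀ k, (π k).1 = agentStrategy T₁ T₂ T₃ T₄ (pre π k))
    (h1 : ∀ k, ¬AgentWins₁ T₁ (pre π k)) {k : ℕ} (hk : Secures₃ T₁ T₂ T₃ T₄ (pre π k)) :
    π ∈ Safe T₂ ∪ (Reach T₃ ∩ Safe T₄) := by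
  have h3 : ∀ j ≥ k, Secures₃ T₁ T₂ T₃ T₄ (pre π j) := Nat.le_induction hk fun j _ hj => by
    rw [pre_succ_pair, hπ]
    exact secures₃_append (h1 j) hj _
  rcases forall_or_forall_of_eventually_or (antitone_keeps_pre π) (antitone_keeps_pre π)
    fun j hj => keeps_or_keeps_of_secures₃ (h1 j) (h3 j hj) with h2 | h4
  · exact Or.inl (mem_safe_iff.2 h2)
  · exact Or.inr ⟨mem_reach_iff.2 ⟨k, hk.1⟩, mem_safe_iff.2 h4⟩

theorem mem_of_agentStrategy [Finite A] [Nonempty A] (h0 : ¬EnvWins T₁ T₂ T₃ T₄ [])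
    (hπ : ∀ k, (π k).1 = agentStrategy T₁ T₂ T₃ T₄ (pre π k)) :
    π ∈ Reach T₁ ∪ Safe T₂ ∪ (Reach T₃ ∩ Safe T₄) := by
  by_cases h1 : ∃ k, AgentWins₁ T₁ (pre π k)
  · obtain ⟨k, hk⟩ := h1
    refine Or.inl (Or.inl (mem_reach_iff.2 (exists_goal_of_agentAttrMove (fun j hj _ => ?_) hk)))
    rw [hπ, agentStrategy]
    exact if_pos hj
  simp only [not_exists] at h1
  by_cases h3 : ∃ k, Secures₃ T₁ T₂ T₃ T₄ (pre π k)
  · obtain ⟨k, hk⟩ := h3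
    rw [Set.union_assoc]
    exact Or.inr (mem_of_secures₃ hπ h1 hk)
  simp only [not_exists] at h3
  have h13 : ∀ k, ¬AgentWins₁₃ T₁ T₂ T₃ T₄ (pre π k) := by
    intro k hk
    obtain ⟨j, hj⟩ := exists_goal_of_agentAttrMove (fun j hj _ => by
      rw [hπ, agentStrategy, if_neg (h1 j), if_neg (h3 j)]; exact if_pos hj) hk
    exact hj.elim (fun hj => h1 j ⟨0, hj⟩) (h3 j)
  have hE : ∀ k, ¬EnvWins T₁ T₂ T₃ T₄ (pre π k) := fun k => by
    induction k with
    | zero => exact h0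
    | succ k ih =>
      rw [pre_succ_pair, hπ]
      exact not_envWins_append (h13 k) ih _
  exact Or.inl (Or.inr (mem_safe_iff.2 fun k => keeps₂_of_not_envWins (h13 k) (hE k)))

theorem not_mem_of_envStrategy [Finite B] [Nonempty B] (h0 : EnvWins T₁ T₂ T₃ T₄ [])
    (hπ : ∀ k, (π k).2 = envStrategy T₁ T₂ T₃ T₄ (pre π k) (π k).1) :
    π ∉ Reach T₁ ∪ Safe T₂ ∪ (Reach T₃ ∩ Safe T₄) := by
  have hI : ∀ k, EnvInvariant T₁ T₂ T₃ T₄ (pre π k) := fun k => by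
    induction k with
    | zero => exact ⟨fun h3 => absurd h3 not_hits_nil, fun _ => h0⟩
    | succ k ih =>
      rw [pre_succ_pair, hπ]
      exact envInvariant_append ih _
  have hbreak₂₄ : ∀ k, Hits T₃ (pre π k) → ∃ j, ¬Keeps T₂ (pre π j) ∧ ¬Keeps T₄ (pre π j) :=
    fun k hk => exists_goal_of_envMove (fun j hj => by
      rw [hπ, envStrategy, if_pos (monotone_hits_pre π hj hk)]) ((hI k).1 hk)
  have hbreak₂ : ∃ j, ¬Keeps T₂ (pre π j) := by
    by_cases h3 : ∃ k, Hits T₃ (pre π k)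
    · obtain ⟨k, hk⟩ := h3
      obtain ⟨j, hj, -⟩ := hbreak₂₄ k hk
      exact ⟨j, hj⟩
    simp only [not_exists] at h3
    exact exists_goal_of_envMove (k := 0) (fun j _ => by rw [hπ, envStrategy, if_neg (h3 j)])
      ((hI 0).2 (h3 0))
  rintro ((h1 | h2) | ⟨h3, h4⟩)
  · obtain ⟨k, hk⟩ := mem_reach_iff.1 h1
    exact not_hits₁_of_envInvariant (hI k) hk
  · obtain ⟨j, hj⟩ := hbreak₂
    exact hj (mem_safe_iff.1 h2 j)
  · obtain ⟨k, hk⟩ := mem_reach_iff.1 h3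
    obtain ⟨j, -, hj⟩ := hbreak₂₄ k hk
    exact hj (mem_safe_iff.1 h4 j)

end Plays

end ReachSafeGame

open ReachSafeGame in
/-- Determinacy of the combined reachability/safety games: for
`P = Reach T₁ ∪ Safe T₂ ∪ (Reach T₃ ∩ Safe T₄)`, exactly one of the following
holds: (i) some agent strategy enforces `P`; (ii) some environment strategy
enforces the complement of `P`. -/
theorem combined_reach_safe_determinacy {A B : Type}
    [Fintype A] [Fintype B] [Nonempty A] [Nonempty B]
    (T₁ T₂ T₃ T₄ : Set (List (A × B))) :
    Xor' (∃ σag : List B → A,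
        AgentEnforces σag (Reach T₁ ∪ Safe T₂ ∪ (Reach T₃ ∩ Safe T₄)))
      (∃ σenv : List A → B,
        EnvEnforces σenv (Reach T₁ ∪ Safe T₂ ∪ (Reach T₃ ∩ Safe T₄))ᶜ) := by
  by_cases h0 : EnvWins T₁ T₂ T₃ T₄ []
  · have hσ : EnvEnforces (envOf (envStrategy T₁ T₂ T₃ T₄))
        (Reach T₁ ∪ Safe T₂ ∪ (Reach T₃ ∩ Safe T₄))ᶜ :=
      fun σag => not_mem_of_envStrategy h0 (play_envOf_snd _ σag)
    exact Or.inr ⟨⟨_, hσ⟩, fun ⟨σag, hag⟩ => hσ σag (hag _)⟩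
  · have hσ : AgentEnforces (agentOf (agentStrategy T₁ T₂ T₃ T₄))
        (Reach T₁ ∪ Safe T₂ ∪ (Reach T₃ ∩ Safe T₄)) :=
      fun σenv => mem_of_agentStrategy h0 (play_agentOf_fst _ σenv)
    exact Or.inl ⟨⟨_, hσ⟩, fun ⟨σenv, henv⟩ => henv _ (hσ σenv)⟩
end

section
/- Equivalence of synthesis under environment specifications and implication synthesis for reachability/safety specifications: for all sets E₁, E₂, T₁, T₂ of nonempty finite words over A × B, letting Env := Reach E₁ ∩ Safe E₂ and Task := Reach T₁ ∩ Safe T₂, the following are equivalent: (i) there exists an agent strategy enforcing Task under Env; (ii) there exists an agent strategy enforcing Envᶜ ∪ Task. -/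
/-! The implication `Envᶜ ∪ Task` is a Boolean combination of the reachability conditions
`Reach E₁`, `Reach E₂ᶜ`, `Reach T₁`, `Reach T₂ᶜ`, and such games are determined. So if no agent
strategy enforces the implication, some environment strategy enforces `Env ∩ Taskᶜ`: it enforces
`Env` and defeats every agent strategy, so no agent strategy enforces `Task` under `Env`.

Determinacy is proved for strategies that see the whole history, by induction on the number of
conditions not yet met: up to the first position where a new condition is met, the game is a
reachability game, which is determined by the Gale–Stewart argument. -/

namespace Game

open Classical

variable {A B : Type}

def step (τa : List (A × B) → A) (τe : List (A × B) → A → B) (g : List (A × B)) :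
    List (A × B) :=
  g ++ [(τa g, τe g (τa g))]

def run (τa : List (A × B) → A) (τe : List (A × B) → A → B) (h : List (A × B)) (k : ℕ) :
    List (A × B) :=
  (step τa τe)^[k] h

section Run

variable {τa : List (A × B) → A} {τe : List (A × B) → A → B} {h : List (A × B)}

@[simp] lemma run_zero : run τa τe h 0 = h := rfl

lemma run_succ (k : ℕ) : run τa τe h (k + 1) = step τa τe (run τa τe h k) :=
  Function.iterate_succ_apply' _ _ _

lemma run_add (k m : ℕ) : run τa τe h (k + m) = run τa τe (run τa τe h k) m := by
  rw [run, run, run, add_comm, Function.iterate_add_apply]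

@[simp] lemma length_run (k : ℕ) : (run τa τe h k).length = h.length + k := by
  induction k with
  | zero => rfl
  | succ k ih => simp [run_succ, step, ih, add_assoc]

lemma run_prefix_run {k k' : ℕ} (hk : k ≤ k') : run τa τe h k <+: run τa τe h k' := by
  induction hk with
  | refl => exact List.prefix_rfl
  | step _ ih => exact ih.trans (by rw [run_succ]; exact List.prefix_append _ _)

lemma prefix_run (k : ℕ) : h <+: run τa τe h k := run_prefix_run (Nat.zero_le k)

lemma eq_run_of_prefix {p : List (A × B)} {k : ℕ} (hp : h <+: p) (hpk : p <+: run τa τe h k) :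
    p = run τa τe h (p.length - h.length) := by
  have hlen : p.length ≤ h.length + k := by simpa using hpk.length_le
  have hrun : run τa τe h (p.length - h.length) <+: run τa τe h k := run_prefix_run (by omega)
  exact (List.prefix_of_prefix_length_le hpk hrun (by simp; omega)).eq_of_length
    (by simp; have := hp.length_le; omega)

lemma getElem_run {j k : ℕ} (hj : j < k) :
    (run τa τe h k)[h.length + j]'(by simp [hj]) =
      (τa (run τa τe h j), τe (run τa τe h j) (τa (run τa τe h j))) := by
  rw [← (run_prefix_run hj : run τa τe h (j + 1) <+: _).getElem (by simp)]
  simp [run_succ, step, List.getElem_append_right]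

lemma run_congr {τa' : List (A × B) → A} {τe' : List (A × B) → A → B} {n : ℕ}
    (hstep : ∀ k < n, step τa' τe' (run τa τe h k) = step τa τe (run τa τe h k)) :
    run τa' τe' h n = run τa τe h n := by
  induction n with
  | zero => rfl
  | succ n ih =>
    rw [run_succ, run_succ, ih fun k hk => hstep k (by omega), hstep n (by omega)]

end Run

/-- Play `τ` until the history first has a prefix `g₀ ∈ Trig`, then play `t g₀`. -/
noncomputable def switch {α X : Type} (Trig : Set (List α)) (τ : List α → X)
    (t : List α → List α → X) (g : List α) : X :=
  if hg : ∃ n, g.take n ∈ Trig then t (g.take (Nat.find hg)) g else τ g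

section Switch

variable {α X : Type} {Trig : Set (List α)} {τ : List α → X} {t : List α → List α → X}

lemma switch_of_forall_not_mem {g : List α} (hg : ∀ p, p <+: g → p ∉ Trig) :
    switch Trig τ t g = τ g :=
  dif_neg fun ⟨n, hn⟩ => hg _ (List.take_prefix n g) hn

lemma switch_of_first {g₀ g : List α} (hg₀ : g₀ ∈ Trig) (hfirst : ∀ p, p <+: g₀ → p ∈ Trig → p = g₀)
    (hg : g₀ <+: g) : switch Trig τ t g = t g₀ g := by
  have htake : g.take g₀.length = g₀ := (List.prefix_iff_eq_take.mp hg).symm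
  have hmem : g.take g₀.length ∈ Trig := by rw [htake]; exact hg₀
  have hex : ∃ n, g.take n ∈ Trig := ⟨_, hmem⟩
  have hfind : Nat.find hex = g₀.length := by
    refine (Nat.find_eq_iff hex).mpr ⟨hmem, fun n hn hnT => ?_⟩
    have hgn : g.take n = g₀.take n := by rw [← htake, List.take_take, min_eq_left hn.le]
    have := congrArg List.length (hfirst _ (hgn ▸ List.take_prefix n g₀) hnT)
    simp at this
    omega
  rw [switch, dif_pos hex, hfind, htake]

@[simp] lemma switch_const : switch Trig τ (fun _ => τ) = τ := by
  funext g
  unfold switch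
  split <;> rfl

end Switch

section RunSwitch

variable {τa : List (A × B) → A} {τe : List (A × B) → A → B} {h : List (A × B)}
  {Trig : Set (List (A × B))} {ta : List (A × B) → List (A × B) → A}
  {te : List (A × B) → List (A × B) → A → B}

lemma run_switch_of_not_mem (hTrig : ∀ g ∈ Trig, h <+: g) {n : ℕ}
    (hn : ∀ k < n, run τa τe h k ∉ Trig) :
    run (switch Trig τa ta) (switch Trig τe te) h n = run τa τe h n := by
  refine run_congr fun k hk => ?_
  have hsw : ∀ {X : Type} (τ : List (A × B) → X) (t : List (A × B) → List (A × B) → X),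
      switch Trig τ t (run τa τe h k) = τ (run τa τe h k) := fun τ t =>
    switch_of_forall_not_mem fun p hp hpT => by
      rw [eq_run_of_prefix (hTrig p hpT) hp] at hpT
      exact hn _ (by have := hp.length_le; simp at this; omega) hpT
  simp only [step, hsw]

lemma run_switch_of_forall_not_mem (hTrig : ∀ g ∈ Trig, h <+: g)
    (hk : ∀ k, run τa τe h k ∉ Trig) :
    run (switch Trig τa ta) (switch Trig τe te) h = run τa τe h :=
  funext fun _ => run_switch_of_not_mem hTrig fun k _ => hk k

lemma run_switch_of_first (hTrig : ∀ g ∈ Trig, h <+: g) {K : ℕ} (hK : run τa τe h K ∈ Trig)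
    (hmin : ∀ j < K, run τa τe h j ∉ Trig) :
    run (switch Trig τa ta) (switch Trig τe te) h K = run τa τe h K ∧
      run (switch Trig τa ta) (switch Trig τe te) (run τa τe h K) =
        run (ta (run τa τe h K)) (te (run τa τe h K)) (run τa τe h K) := by
  set g := run τa τe h K
  refine ⟨run_switch_of_not_mem hTrig hmin, funext fun n => run_congr fun k _ => ?_⟩
  · have hfirst : ∀ p, p <+: g → p ∈ Trig → p = g := fun p hp hpT => by
      have hpj := eq_run_of_prefix (hTrig p hpT) hp
      have hlen : p.length ≤ h.length + K := by simpa [g] using hp.length_le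
      rcases (show p.length - h.length < K ∨ p.length - h.length = K by omega) with hlt | heq
      · have := hmin _ hlt
        rw [← hpj] at this
        exact absurd hpT this
      · rw [hpj, heq]
    have hsw : ∀ {X : Type} (τ : List (A × B) → X) (t : List (A × B) → List (A × B) → X),
        switch Trig τ t (run (ta g) (te g) g k) = t g (run (ta g) (te g) g k) := fun τ t =>
      switch_of_first hK hfirst (prefix_run k)
    simp only [step, hsw]

lemma run_switch_next_round {g : List (A × B)} (m : ℕ) :
    run (switch {g' | g <+: g' ∧ g'.length = g.length + 1} τa ta)
        (switch {g' | g <+: g' ∧ g'.length = g.length + 1} τe te) g (m + 1) =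
      run (ta (step τa τe g)) (te (step τa τe g)) (step τa τe g) m := by
  obtain ⟨h1, hrest⟩ := run_switch_of_first (h := g) (τa := τa) (τe := τe) (ta := ta) (te := te)
    (Trig := {g' | g <+: g' ∧ g'.length = g.length + 1}) (K := 1) (fun _ hg' => hg'.1)
    (by simp [run_succ, step]) (fun j hj hjT => by
      obtain rfl : j = 0 := by omega
      simp at hjT)
  rw [Nat.add_comm m 1, run_add, h1, hrest]
  rfl

end RunSwitch

section Reachability

variable (X : Set (List (A × B)))

def AgentForces (h : List (A × B)) : Prop := ∃ τa, ∀ τe, ∃ k, run τa τe h k ∈ X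

def EnvForces (h : List (A × B)) : Prop := ∃ τe, ∀ τa, ∃ k, run τa τe h k ∈ X

def AgentAvoids (h : List (A × B)) : Prop := ∃ τa, ∀ τe, ∀ k, run τa τe h k ∉ X

def EnvAvoids (h : List (A × B)) : Prop := ∃ τe, ∀ τa, ∀ k, run τa τe h k ∉ X

variable {X}

lemma agentForces_of_exists_forall {g : List (A × B)}
    (hg : ∃ a, ∀ b, AgentForces X (g ++ [(a, b)])) : AgentForces X g := by
  obtain ⟨a, ha⟩ := hg
  let t : List (A × B) → List (A × B) → A := fun g' =>
    if hg' : AgentForces X g' then hg'.choose else fun _ => a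
  refine ⟨switch {g' | g <+: g' ∧ g'.length = g.length + 1} (fun _ => a) t, fun τe => ?_⟩
  have hwin := ha (τe g a)
  obtain ⟨m, hm⟩ := hwin.choose_spec τe
  refine ⟨m + 1, ?_⟩
  have := run_switch_next_round (τa := fun _ => a) (τe := τe) (ta := t) (te := fun _ => τe)
    (g := g) m
  rw [switch_const] at this
  rw [this]
  simpa [t, step, dif_pos hwin] using hm

lemma envForces_of_forall_exists {g : List (A × B)}
    (hg : ∀ a, ∃ b, EnvForces X (g ++ [(a, b)])) : EnvForces X g := by
  choose β hβ using hg
  let t : List (A × B) → List (A × B) → A → B := fun g' =>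
    if hg' : EnvForces X g' then hg'.choose else fun _ => β
  refine ⟨switch {g' | g <+: g' ∧ g'.length = g.length + 1} (fun _ => β) t, fun τa => ?_⟩
  have hwin := hβ (τa g)
  obtain ⟨m, hm⟩ := hwin.choose_spec τa
  refine ⟨m + 1, ?_⟩
  have := run_switch_next_round (τa := τa) (τe := fun _ => β) (ta := fun _ => τa) (te := t)
    (g := g) m
  rw [switch_const] at this
  rw [this]
  simpa [t, step, dif_pos hwin] using hm

/-- Open determinacy (Gale–Stewart): the environment keeps the agent out of its winning
region, which is possible by `agentForces_of_exists_forall`. -/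
lemma agentForces_or_envAvoids [Nonempty B] (h : List (A × B)) :
    AgentForces X h ∨ EnvAvoids X h := by
  refine or_iff_not_imp_left.mpr fun hF => ?_
  have hnext : ∀ g, ¬AgentForces X g → ∀ a, ∃ b, ¬AgentForces X (g ++ [(a, b)]) :=
    fun g hg a => by
      by_contra! hall
      exact hg (agentForces_of_exists_forall ⟨a, hall⟩)
  let τe : List (A × B) → A → B := fun g a =>
    if hb : ∃ b, ¬AgentForces X (g ++ [(a, b)]) then hb.choose else Classical.arbitrary B
  refine ⟨τe, fun τa => ?_⟩
  have hout : ∀ k, ¬AgentForces X (run τa τe h k) := by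
    intro k
    induction k with
    | zero => exact hF
    | succ k ih =>
      have hb := hnext _ ih (τa (run τa τe h k))
      rw [run_succ, step]
      simpa only [τe, dif_pos hb] using hb.choose_spec
  exact fun k hk => hout k ⟨τa, fun _ => ⟨0, hk⟩⟩

lemma envForces_or_agentAvoids [Nonempty A] (h : List (A × B)) :
    EnvForces X h ∨ AgentAvoids X h := by
  refine or_iff_not_imp_left.mpr fun hF => ?_
  have hnext : ∀ g, ¬EnvForces X g → ∃ a, ∀ b, ¬EnvForces X (g ++ [(a, b)]) :=
    fun g hg => by
      by_contra! hall
      exact hg (envForces_of_forall_exists hall)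
  let τa : List (A × B) → A := fun g =>
    if ha : ∃ a, ∀ b, ¬EnvForces X (g ++ [(a, b)]) then ha.choose else Classical.arbitrary A
  refine ⟨τa, fun τe => ?_⟩
  have hout : ∀ k, ¬EnvForces X (run τa τe h k) := by
    intro k
    induction k with
    | zero => exact hF
    | succ k ih =>
      have ha := hnext _ ih
      rw [run_succ, step]
      simpa only [τa, dif_pos ha] using ha.choose_spec _
  exact fun k hk => hout k ⟨τe, fun _ => ⟨0, hk⟩⟩

end Reachability

/-- How `Reach U` reads a finite history. -/
def Visits {α : Type} (U : Set (List α)) (g : List α) : Prop :=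
  ∃ p, p <+: g ∧ p ≠ [] ∧ p ∈ U

lemma Visits.mono {α : Type} {U : Set (List α)} {g g' : List α} (hg : g <+: g')
    (hU : Visits U g) : Visits U g' :=
  let ⟨p, hp, hne, hpU⟩ := hU
  ⟨p, hp.trans hg, hne, hpU⟩

section Boolean

variable {ι : Type} (U : ι → Set (List (A × B))) (φ : (ι → Prop) → Prop)

def outcome (r : ℕ → List (A × B)) : ι → Prop := fun i => ∃ k, Visits (U i) (r k)

def AgentWins (h : List (A × B)) : Prop := ∃ τa, ∀ τe, φ (outcome U (run τa τe h))

def EnvWins (h : List (A × B)) : Prop := ∃ τe, ∀ τa, ¬φ (outcome U (run τa τe h))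

def NewEvent (h g : List (A × B)) : Prop := h <+: g ∧ ∃ i, ¬Visits (U i) h ∧ Visits (U i) g

noncomputable def pending [Fintype ι] (h : List (A × B)) : ℕ := {i | ¬Visits (U i) h}.toFinset.card

variable {U φ} {τa : List (A × B) → A} {τe : List (A × B) → A → B} {h : List (A × B)}

lemma pending_lt [Fintype ι] {g : List (A × B)} (hg : NewEvent U h g) :
    pending U g < pending U h := by
  obtain ⟨hhg, i, hih, hig⟩ := hg
  refine Finset.card_lt_card (Finset.ssubset_iff_of_subset ?_ |>.mpr ⟨i, ?_, ?_⟩)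
  · intro j
    simp only [Set.mem_toFinset, Set.mem_ofPred_eq]
    exact mt (Visits.mono hhg)
  · simpa using hih
  · simpa using hig

lemma outcome_run_run (K : ℕ) :
    outcome U (run τa τe (run τa τe h K)) = outcome U (run τa τe h) := by
  funext i
  refine propext ⟨fun ⟨m, hm⟩ => ⟨K + m, by rwa [run_add]⟩, fun ⟨k, hk⟩ => ⟨k, ?_⟩⟩
  rw [← run_add]
  exact hk.mono (run_prefix_run (by omega))

lemma outcome_eq_of_forall_not_newEvent (hk : ∀ k, ¬NewEvent U h (run τa τe h k)) :
    outcome U (run τa τe h) = fun i => Visits (U i) h := by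
  funext i
  refine propext ⟨fun ⟨k, hki⟩ => ?_, fun hi => ⟨0, hi⟩⟩
  by_contra hi
  exact hk k ⟨prefix_run k, i, hi, hki⟩

lemma outcome_switch {Trig : Set (List (A × B))} {ta : List (A × B) → List (A × B) → A}
    {te : List (A × B) → List (A × B) → A → B} (hTrig : ∀ g ∈ Trig, h <+: g)
    (hreach : ∃ k, run τa τe h k ∈ Trig) :
    ∃ k, run τa τe h k ∈ Trig ∧
      outcome U (run (switch Trig τa ta) (switch Trig τe te) h) =
        outcome U (run (ta (run τa τe h k)) (te (run τa τe h k)) (run τa τe h k)) := by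
  obtain ⟨h1, h2⟩ := run_switch_of_first (ta := ta) (te := te) hTrig (Nat.find_spec hreach)
    fun j hj => Nat.find_min hreach hj
  exact ⟨_, Nat.find_spec hreach, by rw [← outcome_run_run (Nat.find hreach), h1, h2]⟩

lemma agentWins_of_agentForces {X : Set (List (A × B))} (hX : ∀ g ∈ X, AgentWins U φ g)
    (hF : AgentForces X h) : AgentWins U φ h := by
  obtain ⟨τ₀, hτ₀⟩ := hF
  let t : List (A × B) → List (A × B) → A := fun g =>
    if hg : AgentWins U φ g then hg.choose else τ₀
  refine ⟨switch {g | h <+: g ∧ g ∈ X} τ₀ t, fun τe => ?_⟩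
  obtain ⟨k, hkX⟩ := hτ₀ τe
  obtain ⟨K, hK, heq⟩ := outcome_switch (U := U) (Trig := {g | h <+: g ∧ g ∈ X}) (τa := τ₀)
    (ta := t) (te := fun _ => τe) (fun _ hg => hg.1) ⟨k, prefix_run k, hkX⟩
  have hwin := hX _ hK.2
  rw [switch_const] at heq
  simpa only [heq, t, dif_pos hwin] using hwin.choose_spec τe

lemma envWins_of_envForces {X : Set (List (A × B))} (hX : ∀ g ∈ X, EnvWins U φ g)
    (hF : EnvForces X h) : EnvWins U φ h := by
  obtain ⟨τ₀, hτ₀⟩ := hF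
  let t : List (A × B) → List (A × B) → A → B := fun g =>
    if hg : EnvWins U φ g then hg.choose else τ₀
  refine ⟨switch {g | h <+: g ∧ g ∈ X} τ₀ t, fun τa => ?_⟩
  obtain ⟨k, hkX⟩ := hτ₀ τa
  obtain ⟨K, hK, heq⟩ := outcome_switch (U := U) (Trig := {g | h <+: g ∧ g ∈ X}) (τe := τ₀)
    (ta := fun _ => τa) (te := t) (fun _ hg => hg.1) ⟨k, prefix_run k, hkX⟩
  have hwin := hX _ hK.2
  rw [switch_const] at heq
  simpa only [heq, t, dif_pos hwin] using hwin.choose_spec τa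

/-- If the agent is content with the events seen so far, it avoids the new-event positions
won by the environment and switches to a winning strategy at the first new event. -/
lemma agentWins_of_agentAvoids {X : Set (List (A × B))} (hφ : φ fun i => Visits (U i) h)
    (hX : ∀ g, NewEvent U h g → g ∉ X → AgentWins U φ g) (hA : AgentAvoids X h) :
    AgentWins U φ h := by
  obtain ⟨τ₀, hτ₀⟩ := hA
  let t : List (A × B) → List (A × B) → A := fun g =>
    if hg : AgentWins U φ g then hg.choose else τ₀
  refine ⟨switch {g | NewEvent U h g} τ₀ t, fun τe => ?_⟩
  by_cases hnew : ∃ k, NewEvent U h (run τ₀ τe h k)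
  · obtain ⟨K, hK, heq⟩ := outcome_switch (U := U) (Trig := {g | NewEvent U h g}) (τa := τ₀)
      (ta := t) (te := fun _ => τe) (fun _ hg => hg.1) hnew
    have hwin := hX _ hK (hτ₀ τe K)
    rw [switch_const] at heq
    simpa only [heq, t, dif_pos hwin] using hwin.choose_spec τe
  · push Not at hnew
    have hrun := run_switch_of_forall_not_mem (Trig := {g | NewEvent U h g})
      (ta := t) (te := fun _ => τe) (fun _ hg => hg.1) hnew
    rw [switch_const] at hrun
    rwa [hrun, outcome_eq_of_forall_not_newEvent hnew]

lemma envWins_of_envAvoids {X : Set (List (A × B))} (hφ : ¬φ fun i => Visits (U i) h)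
    (hX : ∀ g, NewEvent U h g → g ∉ X → EnvWins U φ g) (hA : EnvAvoids X h) :
    EnvWins U φ h := by
  obtain ⟨τ₀, hτ₀⟩ := hA
  let t : List (A × B) → List (A × B) → A → B := fun g =>
    if hg : EnvWins U φ g then hg.choose else τ₀
  refine ⟨switch {g | NewEvent U h g} τ₀ t, fun τa => ?_⟩
  by_cases hnew : ∃ k, NewEvent U h (run τa τ₀ h k)
  · obtain ⟨K, hK, heq⟩ := outcome_switch (U := U) (Trig := {g | NewEvent U h g}) (τe := τ₀)
      (ta := fun _ => τa) (te := t) (fun _ hg => hg.1) hnew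
    have hwin := hX _ hK (hτ₀ τa K)
    rw [switch_const] at heq
    simpa only [heq, t, dif_pos hwin] using hwin.choose_spec τa
  · push Not at hnew
    have hrun := run_switch_of_forall_not_mem (Trig := {g | NewEvent U h g})
      (ta := fun _ => τa) (te := t) (fun _ hg => hg.1) hnew
    rw [switch_const] at hrun
    rwa [hrun, outcome_eq_of_forall_not_newEvent hnew]

variable (U φ) in
theorem agentWins_or_envWins [Fintype ι] [Nonempty A] [Nonempty B] (h : List (A × B)) :
    AgentWins U φ h ∨ EnvWins U φ h := by
  induction hn : pending U h using Nat.strong_induction_on generalizing h with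
  | _ n ih =>
  have hnew : ∀ g, NewEvent U h g → AgentWins U φ g ∨ EnvWins U φ g :=
    fun g hg => ih _ (hn ▸ pending_lt hg) g rfl
  by_cases hφ : φ fun i => Visits (U i) h
  · rcases envForces_or_agentAvoids (X := {g | NewEvent U h g ∧ EnvWins U φ g}) h with hF | hA
    · exact .inr (envWins_of_envForces (fun _ hg => hg.2) hF)
    · exact .inl (agentWins_of_agentAvoids hφ (hA := hA)
        (fun g hg hgX => (hnew g hg).resolve_right fun hw => hgX (And.intro hg hw)))
  · rcases agentForces_or_envAvoids (X := {g | NewEvent U h g ∧ AgentWins U φ g}) h with hF | hA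
    · exact .inl (agentWins_of_agentForces (fun _ hg => hg.2) hF)
    · exact .inr (envWins_of_envAvoids hφ (hA := hA)
        (fun g hg hgX => (hnew g hg).resolve_left fun hw => hgX (And.intro hg hw)))

end Boolean

section Strategies

lemma take_pre {α : Type} (π : ℕ → α) (n k : ℕ) : (pre π k).take n = pre π (min n k) := by
  rw [pre, ← List.map_take, List.take_range, pre]

lemma mem_reach_iff_exists_visits {T : Set (List (A × B))} {π : ℕ → A × B} :
    π ∈ Reach T ↔ ∃ k, Visits T (pre π k) := by
  refine ⟨fun ⟨k, hk, hkT⟩ => ⟨k, pre π k, List.prefix_rfl, ?_, hkT⟩,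
    fun ⟨k, p, hp, hne, hpT⟩ => ⟨p.length, List.length_pos_iff.mpr hne, ?_⟩⟩
  · simp only [pre, ne_eq, List.map_eq_nil_iff, List.range_eq_nil]
    omega
  · have hlen : p.length ≤ k := by simpa [pre] using hp.length_le
    rwa [List.prefix_iff_eq_take.mp hp, take_pre, min_eq_left hlen] at hpT

lemma mem_safe_iff {T : Set (List (A × B))} {π : ℕ → A × B} : π ∈ Safe T ↔ π ∉ Reach Tᶜ := by
  simp [Safe, Reach]

def ofAgent (σag : List B → A) : List (A × B) → A := fun g => σag (g.map Prod.snd)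

def ofEnv (σenv : List A → B) : List (A × B) → A → B := fun g a => σenv (g.map Prod.fst ++ [a])

lemma playPrefix_eq_run (σag : List B → A) (σenv : List A → B) (k : ℕ) :
    playPrefix σag σenv k = run (ofAgent σag) (ofEnv σenv) [] k := by
  induction k with
  | zero => rfl
  | succ k ih => rw [run_succ, ← ih]; rfl

lemma pre_play (σag : List B → A) (σenv : List A → B) (k : ℕ) :
    pre (play σag σenv) k = run (ofAgent σag) (ofEnv σenv) [] k := by
  rw [← playPrefix_eq_run]
  induction k with
  | zero => rfl
  | succ k ih =>
    simp only [pre, List.range_succ, List.map_append] at ih ⊢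
    rw [ih]
    rfl

lemma outcome_play {ι : Type} (U : ι → Set (List (A × B))) (σag : List B → A)
    (σenv : List A → B) :
    (fun i => play σag σenv ∈ Reach (U i)) = outcome U (run (ofAgent σag) (ofEnv σenv) []) := by
  funext i
  simp only [mem_reach_iff_exists_visits, pre_play, outcome]

noncomputable def replayEnv [Nonempty B] (bs : List B) : List (A × B) → A → B :=
  fun g _ => bs.getD g.length (Classical.arbitrary B)

noncomputable def replayAgent [Nonempty A] (as : List A) : List (A × B) → A :=
  fun g => as.getD g.length (Classical.arbitrary A)

noncomputable def toAgent [Nonempty B] (τ : List (A × B) → A) : List B → A :=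
  fun bs => τ (run τ (replayEnv bs) [] bs.length)

noncomputable def toEnv [Nonempty A] (τ : List (A × B) → A → B) : List A → B :=
  fun as =>
    let g := run (replayAgent as) τ [] (as.length - 1)
    τ g (replayAgent as g)

variable {τa : List (A × B) → A} {τe : List (A × B) → A → B}

lemma run_replayEnv [Nonempty B] (k : ℕ) :
    run τa (replayEnv ((run τa τe [] k).map Prod.snd)) [] k = run τa τe [] k := by
  refine run_congr fun j hj => ?_
  have := getElem_run (τa := τa) (τe := τe) (h := []) hj
  simp only [List.length_nil, Nat.zero_add] at this
  simp [step, replayEnv, List.getD_eq_getElem?_getD, hj, this]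

lemma run_replayAgent [Nonempty A] (k : ℕ) (a : A) :
    run (replayAgent ((run τa τe [] k).map Prod.fst ++ [a])) τe [] k = run τa τe [] k := by
  refine run_congr fun j hj => ?_
  have := getElem_run (τa := τa) (τe := τe) (h := []) hj
  simp only [List.length_nil, Nat.zero_add] at this
  simp [step, replayAgent, List.getD_eq_getElem?_getD, List.getElem?_append_left, hj, this]

lemma run_ofAgent_toAgent [Nonempty B] :
    run (ofAgent (toAgent τa)) τe [] = run τa τe [] := by
  funext n
  refine run_congr fun k _ => ?_
  simp [step, ofAgent, toAgent, run_replayEnv]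

lemma run_ofEnv_toEnv [Nonempty A] :
    run τa (ofEnv (toEnv τe)) [] = run τa τe [] := by
  funext n
  refine run_congr fun k _ => ?_
  simp [step, ofEnv, toEnv, run_replayAgent, replayAgent, List.getD_eq_getElem?_getD]

end Strategies

theorem reach_boolean_determined {ι : Type} [Fintype ι] [Nonempty A] [Nonempty B]
    (U : ι → Set (List (A × B))) (φ : (ι → Prop) → Prop) :
    (∃ σag, AgentEnforces σag {π | φ fun i => π ∈ Reach (U i)}) ∨
      ∃ σenv, EnvEnforces σenv {π | φ fun i => π ∈ Reach (U i)}ᶜ := by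
  rcases agentWins_or_envWins U φ [] with ⟨τ, hτ⟩ | ⟨τ, hτ⟩
  · refine .inl ⟨toAgent τ, fun σenv => ?_⟩
    simpa only [Set.mem_ofPred_eq, outcome_play, run_ofAgent_toAgent] using hτ (ofEnv σenv)
  · refine .inr ⟨toEnv τ, fun σag => ?_⟩
    simpa only [Set.mem_compl_iff, Set.mem_ofPred_eq, outcome_play, run_ofEnv_toEnv]
      using hτ (ofAgent σag)

lemma exists_enforcesUnder_iff_of_determined {Task Env : Set (ℕ → A × B)}
    (hdet : (∃ σag, AgentEnforces σag (Envᶜ ∪ Task)) ∨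
      ∃ σenv, EnvEnforces σenv (Envᶜ ∪ Task)ᶜ) :
    (∃ σag, EnforcesUnder σag Task Env) ↔ ∃ σag, AgentEnforces σag (Envᶜ ∪ Task) := by
  refine ⟨fun ⟨σag, hσag⟩ => hdet.resolve_right ?_, fun ⟨σag, hσag⟩ => ?_⟩
  · rintro ⟨σenv, hσenv⟩
    simp only [Set.compl_union, compl_compl] at hσenv
    exact (hσenv σag).2 (hσag σenv fun σ => (hσenv σ).1)
  · exact ⟨σag, fun σenv hσenv => (hσag σenv).resolve_left (not_not.mpr (hσenv σag))⟩

end Game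

open Game in
theorem enforces_under_iff_enforces_implication_general {A B : Type}
    [Nonempty A] [Nonempty B]
    (E₁ E₂ T₁ T₂ : Set (List (A × B))) :
    (∃ σag : List B → A,
        EnforcesUnder σag (Reach T₁ ∩ Safe T₂) (Reach E₁ ∩ Safe E₂)) ↔
      (∃ σag : List B → A,
        AgentEnforces σag ((Reach E₁ ∩ Safe E₂)ᶜ ∪ (Reach T₁ ∩ Safe T₂))) := by
  obtain ⟨U, φ, hW⟩ : ∃ (U : Fin 4 → Set (List (A × B))) (φ : (Fin 4 → Prop) → Prop),
      (Reach E₁ ∩ Safe E₂)ᶜ ∪ (Reach T₁ ∩ Safe T₂) = {π | φ fun i => π ∈ Reach (U i)} :=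
    ⟨![E₁, E₂ᶜ, T₁, T₂ᶜ], fun v => ¬(v 0 ∧ ¬v 1) ∨ (v 2 ∧ ¬v 3), by
      ext π
      simp [mem_safe_iff]⟩
  refine exists_enforcesUnder_iff_of_determined ?_
  rw [hW]
  exact reach_boolean_determined U φ

/-- For `Env = Reach E₁ ∩ Safe E₂` and `Task = Reach T₁ ∩ Safe T₂`, there is an
agent strategy enforcing `Task` under `Env` iff there is an agent strategy
enforcing `Envᶜ ∪ Task`. -/
theorem enforces_under_iff_enforces_implication {A B : Type}
    [Fintype A] [Fintype B] [Nonempty A] [Nonempty B]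
    (E₁ E₂ T₁ T₂ : Set (List (A × B))) :
    (∃ σag : List B → A,
        EnforcesUnder σag (Reach T₁ ∩ Safe T₂) (Reach E₁ ∩ Safe E₂)) ↔
      (∃ σag : List B → A,
        AgentEnforces σag ((Reach E₁ ∩ Safe E₂)ᶜ ∪ (Reach T₁ ∩ Safe T₂))) :=
  enforces_under_iff_enforces_implication_general E₁ E₂ T₁ T₂
end

section
/- Reduction of synthesis under a safety environment specification to a game on the restricted arena (general form): let M be a DFA over A × B with finite state type and accepting set F, let T be the set of nonempty finite words accepted by M, and define EnvWinsFrom(q) to hold iff there exists an environment strategy σenv such that for every agent strategy σag and every k ≥ 1, M.evalFrom q (play(σag, σenv)_{<k}) ∈ F. Then for every property Task ⊆ (ℕ → A × B) and every agent strategy σag: σag enforces Task under the environment specification Safe T if and only if for every environment strategy σenv, writing π = play(σag, σenv) and run(k) = M.eval(π_{<k}), the following implication holds: if EnvWinsFrom(run(k)) for all k ≥ 0 and run(k) ∈ F for all k ≥ 1, then π ∈ Task. -/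
/-- `EnvWinsSafeFrom M q` : the environment has a strategy ensuring that,
starting the run of `M` from state `q`, every state reached after `k ≥ 1`
letters of the play lies in `M.accept`. -/
def EnvWinsSafeFrom {A B Q : Type} (M : DFA (A × B) Q) (q : Q) : Prop :=
  ∃ σenv : List A → B, ∀ σag : List B → A, ∀ k, 1 ≤ k →
    M.evalFrom q (pre (play σag σenv) k) ∈ M.accept

section Prefixes

variable {α : Type}

theorem length_pre (π : ℕ → α) (k : ℕ) : (pre π k).length = k := by
  simp [pre]

theorem pre_succ (π : ℕ → α) (k : ℕ) : pre π (k + 1) = pre π k ++ [π k] := by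
  simp [pre, List.range_succ]

theorem pre_succ' (π : ℕ → α) (k : ℕ) : pre π (k + 1) = π 0 :: pre (fun i => π (i + 1)) k := by
  simp [pre, List.range_succ_eq_map]

theorem map_pre {β : Type} (f : α → β) (π : ℕ → α) (k : ℕ) :
    (pre π k).map f = pre (fun i => f (π i)) k := by
  simp [pre]

theorem eq_of_forall_pre_eq_imp_eq {π π' : ℕ → α}
    (h : ∀ j, pre π' j = pre π j → π' j = π j) : π' = π := by
  have hpre : ∀ k, pre π' k = pre π k := by
    intro k
    induction k with
    | zero => rfl
    | succ k ih => rw [pre_succ, pre_succ, ih, h k ih]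
  funext k
  exact h k (hpre k)

theorem pre_eq_or_exists_first_ne (π π' : ℕ → α) (m : ℕ) :
    pre π' m = pre π m ∨ ∃ j < m, pre π' j = pre π j ∧ π' j ≠ π j := by
  induction m with
  | zero => exact Or.inl rfl
  | succ m ih =>
    rcases ih with hpre | ⟨j, hjm, hj⟩
    · by_cases hm : π' m = π m
      · exact Or.inl (by rw [pre_succ, pre_succ, hpre, hm])
      · exact Or.inr ⟨m, m.lt_succ_self, hpre, hm⟩
    · exact Or.inr ⟨j, by omega, hj⟩

end Prefixes

section Plays

variable {A B : Type}

theorem play_eq (σag : List B → A) (σenv : List A → B) (k : ℕ) :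
    play σag σenv k =
      (σag ((pre (play σag σenv) k).map Prod.snd),
        σenv ((pre (play σag σenv) k).map Prod.fst ++
          [σag ((pre (play σag σenv) k).map Prod.snd)])) := by
  rw [pre_play]; rfl

theorem map_fst_pre_play_succ (σag : List B → A) (σenv : List A → B) (k : ℕ) :
    (pre (play σag σenv) (k + 1)).map Prod.fst =
      (pre (play σag σenv) k).map Prod.fst ++ [σag ((pre (play σag σenv) k).map Prod.snd)] := by
  rw [pre_succ, List.map_append, play_eq σag σenv k]; rfl

theorem fst_play (σag : List B → A) (σenv : List A → B) (k : ℕ) :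
    (play σag σenv k).1 = σag ((pre (play σag σenv) k).map Prod.snd) := by
  rw [play_eq]

theorem snd_play (σag : List B → A) (σenv : List A → B) (k : ℕ) :
    (play σag σenv k).2 = σenv ((pre (play σag σenv) (k + 1)).map Prod.fst) := by
  rw [map_fst_pre_play_succ, play_eq]

def residualAgent (σag : List B → A) (h : List (A × B)) : List B → A :=
  fun l => σag (h.map Prod.snd ++ l)

def residualEnv (σenv : List A → B) (h : List (A × B)) : List A → B :=
  fun l => σenv (h.map Prod.fst ++ l)

theorem playPrefix_add (σag : List B → A) (σenv : List A → B) (k m : ℕ) :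
    playPrefix σag σenv (k + m) = playPrefix σag σenv k ++
      playPrefix (residualAgent σag (playPrefix σag σenv k))
        (residualEnv σenv (playPrefix σag σenv k)) m := by
  induction m with
  | zero => simp [playPrefix]
  | succ m ih =>
    rw [← Nat.add_assoc, playPrefix_succ, playPrefix_succ, ih, List.append_assoc]
    simp only [play, ih, residualAgent, residualEnv, List.map_append, List.append_assoc]

theorem pre_play_add (σag : List B → A) (σenv : List A → B) (k m : ℕ) :
    pre (play σag σenv) (k + m) = pre (play σag σenv) k ++
      pre (play (residualAgent σag (pre (play σag σenv) k))
        (residualEnv σenv (pre (play σag σenv) k))) m := by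
  simp only [pre_play, playPrefix_add]

theorem pre_play_congr_agent {σag σag' : List B → A} (σenv : List A → B) {k : ℕ}
    (h : ∀ l : List B, l.length < k → σag' l = σag l) :
    pre (play σag' σenv) k = pre (play σag σenv) k := by
  induction k with
  | zero => rfl
  | succ k ih =>
    rw [pre_succ, pre_succ, ih (fun l hl => h l (by omega)), play_eq σag' σenv, play_eq σag σenv,
      ih (fun l hl => h l (by omega)), h _ (by simp [length_pre])]

theorem play_congr_env (σag : List B → A) {σenv σenv' : List A → B}
    (h : ∀ k, σenv' ((pre (play σag σenv) (k + 1)).map Prod.fst) =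
      σenv ((pre (play σag σenv) (k + 1)).map Prod.fst)) :
    play σag σenv' = play σag σenv := by
  refine eq_of_forall_pre_eq_imp_eq fun k hk => ?_
  rw [play_eq σag σenv', play_eq σag σenv, hk, ← map_fst_pre_play_succ, h]

theorem play_congr_env_of_head (σag : List B → A) {σenv σenv' : List A → B}
    (h : ∀ t, σenv' (σag [] :: t) = σenv (σag [] :: t)) :
    play σag σenv' = play σag σenv := by
  refine play_congr_env σag fun k => ?_
  rw [pre_succ', List.map_cons]
  exact h _

end Plays

section Deviation

variable {α : Type} [DecidableEq α]

def matchLength (a : ℕ → α) : List α → ℕ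
  | [] => 0
  | x :: l => if x = a 0 then matchLength (fun i => a (i + 1)) l + 1 else 0

theorem matchLength_pre (a : ℕ → α) (n : ℕ) : matchLength a (pre a n) = n := by
  induction n generalizing a with
  | zero => rfl
  | succ n ih => rw [pre_succ', matchLength, if_pos rfl, ih]

theorem matchLength_pre_append_cons (a : ℕ → α) {j : ℕ} {x : α} (hx : x ≠ a j) (t : List α) :
    matchLength a (pre a j ++ x :: t) = j := by
  induction j generalizing a with
  | zero => simp [pre, matchLength, hx]
  | succ j ih => rw [pre_succ', List.cons_append, matchLength, if_pos rfl, ih _ hx]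

variable {B : Type}

def switchOnDeviation (a : ℕ → α) (σenv : List α → B) (τ : ℕ → List α → B) (l : List α) : B :=
  if matchLength a l = l.length then σenv l else τ (matchLength a l) (l.drop (matchLength a l))

theorem switchOnDeviation_pre (a : ℕ → α) (σenv : List α → B) (τ : ℕ → List α → B) (n : ℕ) :
    switchOnDeviation a σenv τ (pre a n) = σenv (pre a n) := by
  rw [switchOnDeviation, if_pos (by rw [matchLength_pre, length_pre])]

theorem switchOnDeviation_pre_append_cons (a : ℕ → α) (σenv : List α → B) (τ : ℕ → List α → B)
    {j : ℕ} {x : α} (hx : x ≠ a j) (t : List α) :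
    switchOnDeviation a σenv τ (pre a j ++ x :: t) = τ j (x :: t) := by
  have hlen : (pre a j ++ x :: t).length ≠ j := by simp [length_pre]
  rw [switchOnDeviation, matchLength_pre_append_cons a hx, if_neg hlen.symm,
    List.drop_left' (length_pre a j)]

end Deviation

theorem DFA.eval_append {α σ : Type*} (M : DFA α σ) (x y : List α) :
    M.eval (x ++ y) = M.evalFrom (M.eval x) y :=
  M.evalFrom_of_append _ x y

section SafetyGame

variable {A B Q : Type} (M : DFA (A × B) Q)

theorem mem_safe_iff_eval_mem_accept (π : ℕ → A × B) :
    π ∈ Safe {w | w ≠ [] ∧ w ∈ M.accepts} ↔ ∀ k, 1 ≤ k → M.eval (pre π k) ∈ M.accept := by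
  refine forall₂_congr fun k hk => and_iff_right ?_
  rw [← List.length_pos_iff, length_pre]
  exact hk

theorem envWinsSafeFrom_eval_pre_play {σenv : List A → B}
    (hsafe : ∀ σag, ∀ k, 1 ≤ k → M.eval (pre (play σag σenv) k) ∈ M.accept)
    (σag : List B → A) (k : ℕ) : EnvWinsSafeFrom M (M.eval (pre (play σag σenv) k)) := by
  refine ⟨residualEnv σenv (pre (play σag σenv) k), fun σag' m hm => ?_⟩
  let σcat : List B → A := fun l => if l.length < k then σag l else σag' (l.drop k)
  have hpre : pre (play σcat σenv) k = pre (play σag σenv) k :=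
    pre_play_congr_agent σenv fun l hl => if_pos hl
  have hres : residualAgent σcat (pre (play σag σenv) k) = σag' := by
    funext l
    simp [σcat, residualAgent, length_pre]
  have hacc := hsafe σcat (k + m) (by omega)
  rwa [pre_play_add, hpre, hres, M.eval_append] at hacc

variable [DecidableEq A]

theorem play_switchOnDeviation (σag : List B → A) (σenv : List A → B) (τ : ℕ → List A → B) :
    play σag (switchOnDeviation (fun i => (play σag σenv i).1) σenv τ) = play σag σenv :=
  play_congr_env σag fun k => by rw [map_pre, switchOnDeviation_pre]

theorem eval_pre_play_switchOnDeviation_mem_accept {σag : List B → A} {σenv : List A → B}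
    {τ : ℕ → List A → B}
    (hacc : ∀ k, 1 ≤ k → M.eval (pre (play σag σenv) k) ∈ M.accept)
    (hτ : ∀ j σ n, 1 ≤ n →
      M.evalFrom (M.eval (pre (play σag σenv) j)) (pre (play σ (τ j)) n) ∈ M.accept)
    (σag' : List B → A) {m : ℕ} (hm : 1 ≤ m) :
    M.eval (pre (play σag' (switchOnDeviation (fun i => (play σag σenv i).1) σenv τ)) m)
      ∈ M.accept := by
  set π := play σag σenv
  set σenv' := switchOnDeviation (fun i => (π i).1) σenv τ
  set π' := play σag' σenv'
  rcases pre_eq_or_exists_first_ne π π' m with hpre | ⟨j, hjm, hpre, hne⟩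
  · rw [hpre]
    exact hacc m hm
  have hdev : (π' j).1 ≠ (π j).1 := by
    intro hfst
    refine hne (Prod.ext hfst ?_)
    have hhist : (pre π' (j + 1)).map Prod.fst = (pre π (j + 1)).map Prod.fst := by
      rw [pre_succ, pre_succ, hpre, List.map_append, List.map_append, List.map_singleton,
        List.map_singleton, hfst]
    rw [snd_play, snd_play, hhist, map_pre]
    exact switchOnDeviation_pre _ σenv τ _
  have hswitch : play (residualAgent σag' (pre π' j)) (residualEnv σenv' (pre π' j)) =
      play (residualAgent σag' (pre π' j)) (τ j) := by
    refine play_congr_env_of_head _ fun t => ?_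
    have hhead : residualAgent σag' (pre π' j) [] = (π' j).1 := by
      rw [residualAgent, List.append_nil, fst_play]
    rw [residualEnv, hhead, hpre, map_pre]
    exact switchOnDeviation_pre_append_cons _ σenv τ hdev t
  obtain ⟨n, rfl⟩ : ∃ n, m = j + n := ⟨m - j, by omega⟩
  rw [pre_play_add, hswitch, M.eval_append, hpre]
  exact hτ j _ n (by omega)

end SafetyGame

theorem enforces_under_safe_iff_restricted_game_general {A B Q : Type}
    (M : DFA (A × B) Q)
    (T : Set (List (A × B))) (hT : T = {w | w ≠ [] ∧ w ∈ M.accepts})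
    (Task : Set (ℕ → A × B)) (σag : List B → A) :
    EnforcesUnder σag Task (Safe T) ↔
      ∀ σenv : List A → B,
        ((∀ k : ℕ, EnvWinsSafeFrom M (M.eval (pre (play σag σenv) k))) ∧
          (∀ k : ℕ, 1 ≤ k → M.eval (pre (play σag σenv) k) ∈ M.accept)) →
        play σag σenv ∈ Task := by
  classical
  subst hT
  simp only [EnforcesUnder, EnvEnforces, mem_safe_iff_eval_mem_accept]
  constructor
  · rintro henf σenv ⟨hwin, hacc⟩
    choose τ hτ using hwin
    have hplay := henf (switchOnDeviation (fun i => (play σag σenv i).1) σenv τ)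
      fun σag' m hm => eval_pre_play_switchOnDeviation_mem_accept M hacc hτ σag' hm
    rwa [play_switchOnDeviation] at hplay
  · intro hgame σenv hsafe
    exact hgame σenv ⟨envWinsSafeFrom_eval_pre_play M hsafe σag, hsafe σag⟩

/-- Reduction of synthesis under a safety environment specification to a game
on the restricted arena: `σag` enforces `Task` under `Safe T` (where `T` is the
set of nonempty finite words accepted by `M`) iff for every environment
strategy, whenever the run of the play in `M` stays in the environment's
safety winning region and in `M.accept` from time `1` on, the play is in
`Task`. -/
theorem enforces_under_safe_iff_restricted_game {A B Q : Type}
    [Fintype A] [Fintype B] [Nonempty A] [Nonempty B] [Fintype Q]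
    (M : DFA (A × B) Q)
    (T : Set (List (A × B))) (hT : T = {w | w ≠ [] ∧ w ∈ M.accepts})
    (Task : Set (ℕ → A × B)) (σag : List B → A) :
    EnforcesUnder σag Task (Safe T) ↔
      ∀ σenv : List A → B,
        ((∀ k : ℕ, EnvWinsSafeFrom M (M.eval (pre (play σag σenv) k))) ∧
          (∀ k : ℕ, 1 ≤ k → M.eval (pre (play σag σenv) k) ∈ M.accept)) →
        play σag σenv ∈ Task :=
  enforces_under_safe_iff_restricted_game_general M T hT Task σag
end
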